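/- arXiv:2410.09791 — 15 statements merged into one kernel-verified Lean document; each statement's English description precedes it below -/
import Mathlib

section
/- Let X = {a, b, c, d} be a four-point space whose open sets are exactly ∅, X, {a}, {b}, {a,b}, and let I = {∅, {c}}, which is an ideal on X. For E = {a, c} and F = {b, c}, one has (E ∪ F)^{*s} ≠ E^{*s} ∪ F^{*s}; thus the semi-local function is not additive. -/
open Set

/-- An ideal on a set `X`: contains `∅`, closed under subsets and finite unions. -/
def IsIdealOn {X : Type*} (I : Set (Set X)) : Prop :=
  ∅ ∈ I ∧ (∀ A B : Set X, A ∈ I → B ⊆ A → B ∈ I) ∧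
    (∀ A B : Set X, A ∈ I → B ∈ I → A ∪ B ∈ I)

/-- The local function: `A* = {x | U ∩ A ∉ I for every open U containing x}`. -/
def localFn {X : Type*} [TopologicalSpace X] (I : Set (Set X)) (A : Set X) : Set X :=
  {x | ∀ U : Set X, IsOpen U → x ∈ U → U ∩ A ∉ I}

/-- A set is semi-open if `S ⊆ Cl(Int S)`. -/
def SemiOpen {X : Type*} [TopologicalSpace X] (S : Set X) : Prop :=
  S ⊆ closure (interior S)

/-- A set is preopen if `S ⊆ Int(Cl S)`. -/
def PreOpen {X : Type*} [TopologicalSpace X] (S : Set X) : Prop :=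
  S ⊆ interior (closure S)

/-- A set is β-open if `S ⊆ Cl(Int(Cl S))`. -/
def BetaOpen {X : Type*} [TopologicalSpace X] (S : Set X) : Prop :=
  S ⊆ closure (interior (closure S))

/-- The semi-local function `A^{*s}`. -/
def semiLocalFn {X : Type*} [TopologicalSpace X] (I : Set (Set X)) (A : Set X) : Set X :=
  {x | ∀ U : Set X, SemiOpen U → x ∈ U → U ∩ A ∉ I}

/-- The pre-local function `A^{*p}`. -/
def preLocalFn {X : Type*} [TopologicalSpace X] (I : Set (Set X)) (A : Set X) : Set X :=
  {x | ∀ U : Set X, PreOpen U → x ∈ U → U ∩ A ∉ I}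

/-- The β-local function `A^{*β}`. -/
def betaLocalFn {X : Type*} [TopologicalSpace X] (I : Set (Set X)) (A : Set X) : Set X :=
  {x | ∀ U : Set X, BetaOpen U → x ∈ U → U ∩ A ∉ I}

/-- `ψ_p(A) = X \ (X \ A)^{*p}`. -/
def psiP {X : Type*} [TopologicalSpace X] (I : Set (Set X)) (A : Set X) : Set X :=
  (preLocalFn I Aᶜ)ᶜ

/-- Semi-closure: intersection of all semi-closed supersets. -/
def sCl {X : Type*} [TopologicalSpace X] (A : Set X) : Set X :=
  ⋂₀ {C : Set X | A ⊆ C ∧ SemiOpen Cᶜ}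

/-- Preclosure: intersection of all preclosed supersets. -/
def pCl {X : Type*} [TopologicalSpace X] (A : Set X) : Set X :=
  ⋂₀ {C : Set X | A ⊆ C ∧ PreOpen Cᶜ}

/-- β-closure: intersection of all β-closed supersets. -/
def betaCl {X : Type*} [TopologicalSpace X] (A : Set X) : Set X :=
  ⋂₀ {C : Set X | A ⊆ C ∧ BetaOpen Cᶜ}

/-- The weak semi-local function `ξ_s(A)`. -/
def xiS {X : Type*} [TopologicalSpace X] (I : Set (Set X)) (A : Set X) : Set X :=
  {x | ∀ U : Set X, SemiOpen U → x ∈ U → sCl U ∩ A ∉ I}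

/-- The weak pre-local function `ξ_p(A)`. -/
def xiP {X : Type*} [TopologicalSpace X] (I : Set (Set X)) (A : Set X) : Set X :=
  {x | ∀ U : Set X, PreOpen U → x ∈ U → pCl U ∩ A ∉ I}

/-- The weak β-local function `ξ_β(A)`. -/
def xiB {X : Type*} [TopologicalSpace X] (I : Set (Set X)) (A : Set X) : Set X :=
  {x | ∀ U : Set X, BetaOpen U → x ∈ U → betaCl U ∩ A ∉ I}

/-- `ψ_{ξ_s}(A) = X \ ξ_s(X \ A)`. -/
def psiXiS {X : Type*} [TopologicalSpace X] (I : Set (Set X)) (A : Set X) : Set X :=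
  (xiS I Aᶜ)ᶜ

/-- `ψ_{ξ_β}(A) = X \ ξ_β(X \ A)`. -/
def psiXiB {X : Type*} [TopologicalSpace X] (I : Set (Set X)) (A : Set X) : Set X :=
  (xiB I Aᶜ)ᶜ

/-- The derived set: accumulation (limit) points of `A`. -/
def derivSet {X : Type*} [TopologicalSpace X] (A : Set X) : Set X :=
  {x | ∀ U : Set X, IsOpen U → x ∈ U → ((U ∩ A) \ {x}).Nonempty}


theorem stmt_4 {X : Type*} [TopologicalSpace X] (a b c d : X)
    (hab : a ≠ b) (hac : a ≠ c) (had : a ≠ d)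
    (hbc : b ≠ c) (hbd : b ≠ d) (hcd : c ≠ d)
    (huniv : (Set.univ : Set X) = {a, b, c, d})
    (hopen : {S : Set X | IsOpen S} = {∅, Set.univ, {a}, {b}, {a, b}}) :
    IsIdealOn ({∅, {c}} : Set (Set X)) ∧
    semiLocalFn ({∅, {c}} : Set (Set X)) (({a, c} : Set X) ∪ {b, c}) ≠
      semiLocalFn ({∅, {c}} : Set (Set X)) {a, c} ∪
        semiLocalFn ({∅, {c}} : Set (Set X)) {b, c} := by

  have hiff : ∀ S : Set X, IsOpen S ↔ S = ∅ ∨ S = Set.univ ∨ S = {a} ∨ S = {b} ∨ S = {a, b} := by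
    intro S
    constructor
    · intro h
      have h2 : S ∈ {S : Set X | IsOpen S} := h
      rw [hopen] at h2
      simpa using h2
    · intro h
      have h2 : S ∈ ({∅, Set.univ, {a}, {b}, {a, b}} : Set (Set X)) := by simpa using h
      rw [← hopen] at h2
      exact h2
  have hc_cl : ∀ S : Set X, S.Nonempty → c ∈ closure S := by
    intro S hS
    rw [mem_closure_iff]
    intro o ho hco
    rcases (hiff o).mp ho with rfl | rfl | rfl | rfl | rfl
    · exact absurd hco (Set.notMem_empty c)
    · simpa using hS
    · exact absurd hco (by simpa using hac.symm)
    · exact absurd hco (by simpa using hbc.symm)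
    · rcases hco with h | h
      · exact absurd h.symm hac
      · exact absurd (Set.mem_singleton_iff.mp h).symm hbc
  have hsemi : ∀ x : X, IsOpen ({x} : Set X) → SemiOpen ({x, c} : Set X) := by
    intro x hx
    have hxi : x ∈ interior ({x, c} : Set X) :=
      mem_interior.mpr ⟨{x}, by simp, hx, rfl⟩
    intro y hy
    rcases hy with rfl | hy
    · exact subset_closure hxi
    · rw [Set.mem_singleton_iff] at hy
      subst hy
      exact hc_cl _ ⟨x, hxi⟩
  constructor
  · refine ⟨by simp, ?_, ?_⟩
    · rintro A B hA hAB
      rcases hA with rfl | hA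
      · left; exact Set.subset_eq_empty hAB rfl
      · rw [Set.mem_singleton_iff] at hA
        subst hA
        rcases Set.subset_singleton_iff_eq.mp hAB with rfl | rfl
        · left; rfl
        · right; rfl
    · rintro A B hA hB
      rcases hA with rfl | hA <;> rcases hB with rfl | hB
      · left; simp
      · rw [Set.mem_singleton_iff] at hB; subst hB; right; simp
      · rw [Set.mem_singleton_iff] at hA; subst hA; right; simp
      · rw [Set.mem_singleton_iff] at hA hB; subst hA; subst hB; right; simp
  · intro heq
    have hcL : c ∈ semiLocalFn ({∅, {c}} : Set (Set X)) (({a, c} : Set X) ∪ {b, c}) := by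
      intro U hU hcU hI
      have hcc : c ∈ closure (interior U) := hU hcU
      have hne : (interior U).Nonempty := by
        by_contra h
        rw [Set.not_nonempty_iff_eq_empty] at h
        rw [h, closure_empty] at hcc
        exact hcc
      have hab' : a ∈ U ∨ b ∈ U := by
        rcases (hiff (interior U)).mp isOpen_interior with h | h | h | h | h
        · rw [h] at hne; simp at hne
        · exact Or.inl (interior_subset (h ▸ (Set.mem_univ a)))
        · exact Or.inl (interior_subset (h ▸ rfl))
        · exact Or.inr (interior_subset (h ▸ rfl))
        · exact Or.inl (interior_subset (by rw [h]; exact Or.inl rfl))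
      have hcM : c ∈ U ∩ (({a, c} : Set X) ∪ {b, c}) := ⟨hcU, Or.inl (Or.inr rfl)⟩
      rcases hI with h | h
      · rw [h] at hcM; exact hcM
      · rw [Set.mem_singleton_iff] at h
        rcases hab' with ha' | hb'
        · have : a ∈ U ∩ (({a, c} : Set X) ∪ {b, c}) := ⟨ha', Or.inl (Or.inl rfl)⟩
          rw [h] at this
          exact hac this
        · have : b ∈ U ∩ (({a, c} : Set X) ∪ {b, c}) := ⟨hb', Or.inr (Or.inl rfl)⟩
          rw [h] at this
          exact hbc this
    rw [heq] at hcL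
    rcases hcL with hcL | hcL
    · have hso : SemiOpen ({b, c} : Set X) := hsemi b ((hiff {b}).mpr (by tauto))
      apply hcL {b, c} hso (by simp)
      right
      rw [Set.mem_singleton_iff]
      ext x
      simp only [Set.mem_inter_iff, Set.mem_insert_iff, Set.mem_singleton_iff]
      constructor
      · rintro ⟨h1, h2⟩
        rcases h1 with rfl | rfl
        · rcases h2 with h2 | h2
          · exact absurd h2.symm hab
          · exact h2
        · rfl
      · rintro rfl; exact ⟨Or.inr rfl, Or.inr rfl⟩
    · have hso : SemiOpen ({a, c} : Set X) := hsemi a ((hiff {a}).mpr (by tauto))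
      apply hcL {a, c} hso (by simp)
      right
      rw [Set.mem_singleton_iff]
      ext x
      simp only [Set.mem_inter_iff, Set.mem_insert_iff, Set.mem_singleton_iff]
      constructor
      · rintro ⟨h1, h2⟩
        rcases h1 with rfl | rfl
        · rcases h2 with h2 | h2
          · exact absurd h2 hab
          · exact h2
        · rfl
      · rintro rfl; exact ⟨Or.inr rfl, Or.inr rfl⟩
end

section
/- Let X = {a, b, c, d} be a four-point space whose open sets are exactly ∅, X, {c,d}, {b,c,d}, {a,c,d}, and let I = {∅, {a}}, which is an ideal on X. For A = {a, c} and B = {a, d}, one has (A ∪ B)^{*p} ≠ A^{*p} ∪ B^{*p}; thus the pre-local function is not additive. -/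
open Set

theorem stmt_5 {X : Type*} [TopologicalSpace X] (a b c d : X)
    (hab : a ≠ b) (hac : a ≠ c) (had : a ≠ d)
    (hbc : b ≠ c) (hbd : b ≠ d) (hcd : c ≠ d)
    (huniv : (Set.univ : Set X) = {a, b, c, d})
    (hopen : {S : Set X | IsOpen S} = {∅, Set.univ, {c, d}, {b, c, d}, {a, c, d}}) :
    IsIdealOn ({∅, {a}} : Set (Set X)) ∧
    preLocalFn ({∅, {a}} : Set (Set X)) (({a, c} : Set X) ∪ {a, d}) ≠
      preLocalFn ({∅, {a}} : Set (Set X)) {a, c} ∪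
        preLocalFn ({∅, {a}} : Set (Set X)) {a, d} := by
  have hopen' : ∀ S : Set X, IsOpen S ↔ S ∈ ({∅, Set.univ, {c, d}, {b, c, d}, {a, c, d}} : Set (Set X)) := by
    intro S
    constructor
    · intro h; rw [← hopen]; exact h
    · intro h
      have : S ∈ {S : Set X | IsOpen S} := by rw [hopen]; exact h
      exact this
  -- {a,b} is closed
  have hab_compl : ({a, b} : Set X)ᶜ = {c, d} := by
    ext x
    constructor
    · intro hx
      have hx' : x ∈ (Set.univ : Set X) := mem_univ x
      rw [huniv] at hx'
      simp only [mem_insert_iff, mem_singleton_iff] at hx' ⊢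
      simp only [mem_compl_iff, mem_insert_iff, mem_singleton_iff] at hx
      push_neg at hx
      rcases hx' with rfl | rfl | rfl | rfl
      · exact absurd rfl hx.1
      · exact absurd rfl hx.2
      · left; rfl
      · right; rfl
    · intro hx
      simp only [mem_insert_iff, mem_singleton_iff] at hx
      simp only [mem_compl_iff, mem_insert_iff, mem_singleton_iff]
      rcases hx with rfl | rfl
      · push_neg; exact ⟨fun h => hac h.symm, fun h => hbc h.symm⟩
      · push_neg; exact ⟨fun h => had h.symm, fun h => hbd h.symm⟩
  have hclosed_ab : IsClosed ({a, b} : Set X) := by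
    rw [← isOpen_compl_iff, hab_compl, hopen']
    simp
  have hint_ab : interior ({a, b} : Set X) = ∅ := by
    have h1 : IsOpen (interior ({a, b} : Set X)) := isOpen_interior
    have h2 : interior ({a, b} : Set X) ⊆ {a, b} := interior_subset
    rw [hopen'] at h1
    simp only [mem_insert_iff, mem_singleton_iff] at h1
    rcases h1 with h | h | h | h | h
    · exact h
    · exfalso
      have : c ∈ ({a, b} : Set X) := h2 (h ▸ mem_univ c)
      simp only [mem_insert_iff, mem_singleton_iff] at this
      rcases this with h' | h' <;> [exact hac h'.symm; exact hbc h'.symm]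
    · exfalso
      have : c ∈ ({a, b} : Set X) := h2 (by rw [h]; simp)
      simp only [mem_insert_iff, mem_singleton_iff] at this
      rcases this with h' | h' <;> [exact hac h'.symm; exact hbc h'.symm]
    · exfalso
      have : c ∈ ({a, b} : Set X) := h2 (by rw [h]; simp)
      simp only [mem_insert_iff, mem_singleton_iff] at this
      rcases this with h' | h' <;> [exact hac h'.symm; exact hbc h'.symm]
    · exfalso
      have : c ∈ ({a, b} : Set X) := h2 (by rw [h]; simp)
      simp only [mem_insert_iff, mem_singleton_iff] at this
      rcases this with h' | h' <;> [exact hac h'.symm; exact hbc h'.symm]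
  -- closure of {b,d} and {b,c} are univ
  have hcl_univ : ∀ S : Set X, b ∈ S → (c ∈ S ∨ d ∈ S) → closure S = univ := by
    intro S hbS hcdS
    have h1 : IsOpen (closure S)ᶜ := isClosed_closure.isOpen_compl
    rw [hopen'] at h1
    have hbcl : b ∈ closure S := subset_closure hbS
    have hccl : c ∈ closure S ∨ d ∈ closure S := by
      rcases hcdS with h | h
      · left; exact subset_closure h
      · right; exact subset_closure h
    simp only [mem_insert_iff, mem_singleton_iff] at h1
    rcases h1 with h | h | h | h | h
    · rwa [compl_empty_iff] at h
    · exfalso; have : b ∈ (closure S)ᶜ := by rw [h]; exact mem_univ b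
      exact this hbcl
    · exfalso
      rcases hccl with hc' | hd'
      · have : c ∈ (closure S)ᶜ := by rw [h]; simp
        exact this hc'
      · have : d ∈ (closure S)ᶜ := by rw [h]; simp
        exact this hd'
    · exfalso; have : b ∈ (closure S)ᶜ := by rw [h]; simp
      exact this hbcl
    · exfalso
      rcases hccl with hc' | hd'
      · have : c ∈ (closure S)ᶜ := by rw [h]; simp
        exact this hc'
      · have : d ∈ (closure S)ᶜ := by rw [h]; simp
        exact this hd'
  constructor
  · refine ⟨Or.inl rfl, ?_, ?_⟩
    · intro A B hA hBA
      simp only [mem_insert_iff, mem_singleton_iff] at hA ⊢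
      rcases hA with rfl | rfl
      · left; exact subset_empty_iff.mp hBA
      · rcases Set.subset_singleton_iff_eq.mp hBA with rfl | rfl
        · left; rfl
        · right; rfl
    · intro A B hA hB
      simp only [mem_insert_iff, mem_singleton_iff] at hA hB ⊢
      rcases hA with rfl | rfl <;> rcases hB with rfl | rfl <;> simp
  · intro heq
    have hL : b ∈ preLocalFn ({∅, {a}} : Set (Set X)) (({a, c} : Set X) ∪ {a, d}) := by
      intro U hU hbU hmem
      have hcd : c ∉ U ∧ d ∉ U := by
        simp only [mem_insert_iff, mem_singleton_iff] at hmem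
        rcases hmem with h | h
        · constructor
          · intro hcU
            have : c ∈ U ∩ (({a, c} : Set X) ∪ {a, d}) := ⟨hcU, Or.inl (by simp)⟩
            rw [h] at this; exact this
          · intro hdU
            have : d ∈ U ∩ (({a, c} : Set X) ∪ {a, d}) := ⟨hdU, Or.inr (by simp)⟩
            rw [h] at this; exact this
        · constructor
          · intro hcU
            have : c ∈ U ∩ (({a, c} : Set X) ∪ {a, d}) := ⟨hcU, Or.inl (by simp)⟩
            rw [h] at this
            exact hac this.symm
          · intro hdU
            have : d ∈ U ∩ (({a, c} : Set X) ∪ {a, d}) := ⟨hdU, Or.inr (by simp)⟩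
            rw [h] at this
            exact had this.symm
      have hUab : U ⊆ ({a, b} : Set X) := by
        intro x hx
        have hx' : x ∈ (Set.univ : Set X) := mem_univ x
        rw [huniv] at hx'
        simp only [mem_insert_iff, mem_singleton_iff] at hx' ⊢
        rcases hx' with rfl | rfl | rfl | rfl
        · left; rfl
        · right; rfl
        · exact absurd hx hcd.1
        · exact absurd hx hcd.2
      have : b ∈ interior (closure U) := hU hbU
      have hsub : interior (closure U) ⊆ interior ({a, b} : Set X) :=
        interior_mono (by rw [← hclosed_ab.closure_eq]; exact closure_mono hUab)
      rw [hint_ab] at hsub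
      exact hsub this
    have hR : b ∉ preLocalFn ({∅, {a}} : Set (Set X)) ({a, c} : Set X) ∪
        preLocalFn ({∅, {a}} : Set (Set X)) ({a, d} : Set X) := by
      intro hb
      rcases hb with hb | hb
      · -- use U = {b, d}
        have hpre : PreOpen ({b, d} : Set X) := by
          intro x _
          rw [hcl_univ {b, d} (by simp) (Or.inr (by simp)), interior_univ]
          exact mem_univ x
        have hempty : ({b, d} : Set X) ∩ {a, c} = ∅ := by
          ext x
          simp only [mem_inter_iff, mem_insert_iff, mem_singleton_iff, mem_empty_iff_false,
            iff_false, not_and]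
          rintro (rfl | rfl) (rfl | rfl)
          · exact hab rfl
          · exact hbc rfl
          · exact had rfl
          · exact hcd rfl
        exact hb ({b, d} : Set X) hpre (by simp) (by rw [hempty]; exact Or.inl rfl)
      · -- use U = {b, c}
        have hpre : PreOpen ({b, c} : Set X) := by
          intro x _
          rw [hcl_univ {b, c} (by simp) (Or.inl (by simp)), interior_univ]
          exact mem_univ x
        have hempty : ({b, c} : Set X) ∩ {a, d} = ∅ := by
          ext x
          simp only [mem_inter_iff, mem_insert_iff, mem_singleton_iff, mem_empty_iff_false,
            iff_false, not_and]
          rintro (rfl | rfl) (rfl | rfl)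
          · exact hab rfl
          · exact hbd rfl
          · exact hac rfl
          · exact hcd rfl
        exact hb ({b, c} : Set X) hpre (by simp) (by rw [hempty]; exact Or.inl rfl)
    rw [heq] at hL
    exact hR hL
end

section
/- Let X = {a, b, c, d} be a four-point space whose open sets are exactly ∅, X, {c,d}, {b,c,d}, {a,c,d}, and let I = {∅, {a}}, which is an ideal on X. For A = {a, c} and B = {a, d}, one has (A ∪ B)^{*β} ≠ A^{*β} ∪ B^{*β}; thus the β-local function is not additive. -/
open Set

theorem stmt_6 {X : Type*} [TopologicalSpace X] (a b c d : X)
    (hab : a ≠ b) (hac : a ≠ c) (had : a ≠ d)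
    (hbc : b ≠ c) (hbd : b ≠ d) (hcd : c ≠ d)
    (huniv : (Set.univ : Set X) = {a, b, c, d})
    (hopen : {S : Set X | IsOpen S} = {∅, Set.univ, {c, d}, {b, c, d}, {a, c, d}}) :
    IsIdealOn ({∅, {a}} : Set (Set X)) ∧
    betaLocalFn ({∅, {a}} : Set (Set X)) (({a, c} : Set X) ∪ {a, d}) ≠
      betaLocalFn ({∅, {a}} : Set (Set X)) {a, c} ∪
        betaLocalFn ({∅, {a}} : Set (Set X)) {a, d} := by
  have hmem : ∀ O : Set X, IsOpen O →
      O = ∅ ∨ O = Set.univ ∨ O = {c, d} ∨ O = {b, c, d} ∨ O = {a, c, d} := by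
    intro O hO
    have h : O ∈ ({∅, Set.univ, {c, d}, {b, c, d}, {a, c, d}} : Set (Set X)) := by
      rw [← hopen]; exact hO
    simpa using h
  have hcd' : ∀ O : Set X, IsOpen O → O ≠ ∅ → c ∈ O ∧ d ∈ O := by
    intro O hO hne
    rcases hmem O hO with rfl | rfl | rfl | rfl | rfl
    · exact absurd rfl hne
    · exact ⟨trivial, trivial⟩
    · exact ⟨by simp, by simp⟩
    · exact ⟨by simp, by simp⟩
    · exact ⟨by simp, by simp⟩
  have hclose : ∀ S : Set X, (c ∈ S ∨ d ∈ S) → closure S = Set.univ := by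
    intro S hS
    apply Set.eq_univ_of_forall
    intro x
    rw [mem_closure_iff]
    intro O hO hxO
    have hne : O ≠ ∅ := by rintro rfl; exact hxO
    obtain ⟨hc, hd⟩ := hcd' O hO hne
    rcases hS with h | h
    · exact ⟨c, hc, h⟩
    · exact ⟨d, hd, h⟩
  have hbeta : ∀ S : Set X, (c ∈ S ∨ d ∈ S) → BetaOpen S := by
    intro S hS
    unfold BetaOpen
    rw [hclose S hS, interior_univ, closure_univ]
    exact Set.subset_univ S
  have hopencd : IsOpen ({c, d} : Set X) := by
    have : ({c, d} : Set X) ∈ {S : Set X | IsOpen S} := by rw [hopen]; simp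
    exact this
  have hcompl : ({a, b} : Set X)ᶜ = {c, d} := by
    ext x
    have hx : x ∈ ({a, b, c, d} : Set X) := by rw [← huniv]; trivial
    simp only [Set.mem_insert_iff, Set.mem_singleton_iff, Set.mem_compl_iff] at hx ⊢
    constructor
    · intro h
      rcases hx with rfl | rfl | rfl | rfl
      · exact absurd (Or.inl rfl) h
      · exact absurd (Or.inr rfl) h
      · exact Or.inl rfl
      · exact Or.inr rfl
    · rintro (rfl | rfl) (h | h)
      · exact hac h.symm
      · exact hbc h.symm
      · exact had h.symm
      · exact hbd h.symm
  have habcl : IsClosed ({a, b} : Set X) := by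
    rw [← isOpen_compl_iff, hcompl]; exact hopencd
  have hint : ∀ T : Set X, T ⊆ ({a, b} : Set X) → interior T = ∅ := by
    intro T hT
    have hcT : c ∉ interior T := by
      intro h'
      have h2 := hT (interior_subset h')
      simp only [Set.mem_insert_iff, Set.mem_singleton_iff] at h2
      rcases h2 with h | h
      · exact hac h.symm
      · exact hbc h.symm
    rcases hmem _ (isOpen_interior (s := T)) with h | h | h | h | h
    · exact h
    · exact absurd (by rw [h]; trivial) hcT
    · exact absurd (by rw [h]; simp) hcT
    · exact absurd (by rw [h]; simp) hcT
    · exact absurd (by rw [h]; simp) hcT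
  constructor
  · refine ⟨Or.inl rfl, ?_, ?_⟩
    · intro A B hA hBA
      simp only [Set.mem_insert_iff, Set.mem_singleton_iff] at hA ⊢
      rcases hA with rfl | rfl
      · exact Or.inl (Set.subset_empty_iff.mp hBA)
      · exact (Set.subset_singleton_iff_eq.mp hBA).imp id id
    · intro A B hA hB
      simp only [Set.mem_insert_iff, Set.mem_singleton_iff] at hA hB ⊢
      rcases hA with rfl | rfl <;> rcases hB with rfl | rfl <;> simp
  · apply ne_of_mem_of_not_mem' (a := a)
    · intro U hU haU hmemI
      have hUsub : ¬ U ⊆ ({a, b} : Set X) := by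
        intro hsub
        have h1 : closure U ⊆ {a, b} := closure_minimal hsub habcl
        have h2 : interior (closure U) = ∅ := hint _ h1
        have h3 := hU haU
        rw [h2, closure_empty] at h3
        exact h3
      obtain ⟨x, hxU, hx⟩ := Set.not_subset.mp hUsub
      have hx4 : x ∈ ({a, b, c, d} : Set X) := by rw [← huniv]; trivial
      simp only [Set.mem_insert_iff, Set.mem_singleton_iff] at hx4 hx
      have hxcd : x = c ∨ x = d := by tauto
      have hxA : x ∈ U ∩ (({a, c} : Set X) ∪ {a, d}) := by
        refine ⟨hxU, ?_⟩
        rcases hxcd with rfl | rfl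
        · exact Or.inl (Or.inr rfl)
        · exact Or.inr (Or.inr rfl)
      simp only [Set.mem_insert_iff, Set.mem_singleton_iff] at hmemI
      rcases hmemI with h | h
      · rw [h] at hxA; exact hxA
      · rw [h] at hxA
        have hxa : x = a := hxA
        rcases hxcd with rfl | rfl
        · exact hac hxa.symm
        · exact had hxa.symm
    · intro h
      have hinter : ∀ y z : X, y ≠ z → ({a, y} : Set X) ∩ {a, z} = {a} := by
        intro y z hyz
        ext x
        simp only [Set.mem_inter_iff, Set.mem_insert_iff, Set.mem_singleton_iff]
        constructor
        · rintro ⟨rfl | rfl, h2 | h2⟩ <;> first | rfl | exact absurd h2 hyz | exact h2.symm ▸ rfl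
        · rintro rfl; exact ⟨Or.inl rfl, Or.inl rfl⟩
      rcases h with h | h
      · exact h {a, d} (hbeta _ (Or.inr (by simp))) (by simp)
          (by rw [Set.inter_comm, hinter c d hcd]; exact Or.inr rfl)
      · exact h {a, c} (hbeta _ (Or.inl (by simp))) (by simp)
          (by rw [Set.inter_comm, hinter d c hcd.symm]; exact Or.inr rfl)
end

section
/- Let X = {a, b, c, d} be a four-point space whose open sets are exactly ∅, X, {a}, {b}, {a,b}, and let I = {∅, {c}}, which is an ideal on X. For A = {a, b, c} and B = {a, c}, one has (A \ B)^{*s} \ B^{*s} = {b} while A^{*s} \ B^{*s} = {b, c, d}; in particular A^{*s} \ B^{*s} ≠ (A \ B)^{*s} \ B^{*s}. -/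
open Set

theorem stmt_7 {X : Type*} [TopologicalSpace X] (a b c d : X)
    (hab : a ≠ b) (hac : a ≠ c) (had : a ≠ d)
    (hbc : b ≠ c) (hbd : b ≠ d) (hcd : c ≠ d)
    (huniv : (Set.univ : Set X) = {a, b, c, d})
    (hopen : {S : Set X | IsOpen S} = {∅, Set.univ, {a}, {b}, {a, b}}) :
    IsIdealOn ({∅, {c}} : Set (Set X)) ∧
    semiLocalFn ({∅, {c}} : Set (Set X)) (({a, b, c} : Set X) \ {a, c}) \
      semiLocalFn ({∅, {c}} : Set (Set X)) {a, c} = {b} ∧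
    semiLocalFn ({∅, {c}} : Set (Set X)) {a, b, c} \
      semiLocalFn ({∅, {c}} : Set (Set X)) {a, c} = {b, c, d} ∧
    semiLocalFn ({∅, {c}} : Set (Set X)) {a, b, c} \
        semiLocalFn ({∅, {c}} : Set (Set X)) {a, c} ≠
      semiLocalFn ({∅, {c}} : Set (Set X)) (({a, b, c} : Set X) \ {a, c}) \
        semiLocalFn ({∅, {c}} : Set (Set X)) {a, c} := by

  have hmem : ∀ x : X, x = a ∨ x = b ∨ x = c ∨ x = d := by
    intro x
    have hx : x ∈ ({a, b, c, d} : Set X) := by rw [← huniv]; trivial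
    simpa using hx
  have ho : ∀ S : Set X, IsOpen S ↔
      (S = ∅ ∨ S = Set.univ ∨ S = {a} ∨ S = {b} ∨ S = {a, b}) := by
    intro S
    constructor
    · intro h
      have : S ∈ ({∅, Set.univ, {a}, {b}, {a, b}} : Set (Set X)) := by
        rw [← hopen]; exact h
      simpa using this
    · intro h
      have : S ∈ {S : Set X | IsOpen S} := by rw [hopen]; simpa using h
      exact this
  have hIa : IsOpen ({a} : Set X) := (ho _).2 (by tauto)
  have hIb : IsOpen ({b} : Set X) := (ho _).2 (by tauto)
  have hclb : ({b, c, d} : Set X) ⊆ closure {b} := by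
    intro x hx
    rw [mem_closure_iff]
    intro o ho' hxo
    rcases (ho o).1 ho' with h | h | h | h | h
    · subst h; exact absurd hxo (Set.notMem_empty x)
    · subst h; exact ⟨b, trivial, rfl⟩
    · subst h
      simp only [Set.mem_singleton_iff] at hxo
      subst hxo
      simp only [Set.mem_insert_iff, Set.mem_singleton_iff] at hx
      rcases hx with h1 | h1 | h1
      exacts [absurd h1 hab, absurd h1 hac, absurd h1 had]
    · subst h; exact ⟨b, rfl, rfl⟩
    · subst h; exact ⟨b, Or.inr rfl, rfl⟩
  have hcla : ({a, c, d} : Set X) ⊆ closure {a} := by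
    intro x hx
    rw [mem_closure_iff]
    intro o ho' hxo
    rcases (ho o).1 ho' with h | h | h | h | h
    · subst h; exact absurd hxo (Set.notMem_empty x)
    · subst h; exact ⟨a, trivial, rfl⟩
    · subst h; exact ⟨a, rfl, rfl⟩
    · subst h
      simp only [Set.mem_singleton_iff] at hxo
      subst hxo
      simp only [Set.mem_insert_iff, Set.mem_singleton_iff] at hx
      rcases hx with h1 | h1 | h1
      exacts [absurd h1.symm hab, absurd h1 hbc, absurd h1 hbd]
    · subst h; exact ⟨a, Or.inl rfl, rfl⟩
  have semiB : ∀ S : Set X, ({b} : Set X) ⊆ S → S ⊆ {b, c, d} → SemiOpen S := by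
    intro S h1 h2 x hx
    have hint : ({b} : Set X) ⊆ interior S := interior_maximal h1 hIb
    exact closure_mono hint (hclb (h2 hx))
  have semiA : ∀ S : Set X, ({a} : Set X) ⊆ S → S ⊆ {a, c, d} → SemiOpen S := by
    intro S h1 h2 x hx
    have hint : ({a} : Set X) ⊆ interior S := interior_maximal h1 hIa
    exact closure_mono hint (hcla (h2 hx))
  have so_a : SemiOpen ({a} : Set X) := semiA _ (by simp) (by simp)
  have so_b : SemiOpen ({b} : Set X) := semiB _ (by simp) (by simp)
  have so_ac : SemiOpen ({a, c} : Set X) := semiA _ (by simp) (by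
    intro x hx
    simp only [Set.mem_insert_iff, Set.mem_singleton_iff] at *
    tauto)
  have so_ad : SemiOpen ({a, d} : Set X) := semiA _ (by simp) (by
    intro x hx
    simp only [Set.mem_insert_iff, Set.mem_singleton_iff] at *
    tauto)
  have so_bc : SemiOpen ({b, c} : Set X) := semiB _ (by simp) (by
    intro x hx
    simp only [Set.mem_insert_iff, Set.mem_singleton_iff] at *
    tauto)
  have so_bd : SemiOpen ({b, d} : Set X) := semiB _ (by simp) (by
    intro x hx
    simp only [Set.mem_insert_iff, Set.mem_singleton_iff] at *
    tauto)
  have hsoab : ∀ U : Set X, SemiOpen U → ∀ x, x ∈ U → a ∈ U ∨ b ∈ U := by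
    intro U hU x hx
    rcases (ho _).1 isOpen_interior with h | h | h | h | h
    · have := hU hx
      rw [h, closure_empty] at this
      exact absurd this (Set.notMem_empty x)
    · left; exact interior_subset (by rw [h]; trivial)
    · left; exact interior_subset (by rw [h]; rfl)
    · right; exact interior_subset (by rw [h]; rfl)
    · left; exact interior_subset (by rw [h]; exact Or.inl rfl)
  have hnotI : ∀ S : Set X, ∀ x, x ∈ S → x ≠ c → S ∉ ({∅, {c}} : Set (Set X)) := by
    intro S x hx hxc h
    simp only [Set.mem_insert_iff, Set.mem_singleton_iff] at h
    rcases h with rfl | rfl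
    · exact hx
    · exact hxc hx
  have hinI : ∀ S : Set X, (S = ∅ ∨ S = {c}) → S ∈ ({∅, {c}} : Set (Set X)) := by
    intro S h
    simp only [Set.mem_insert_iff, Set.mem_singleton_iff]
    exact h
  have hsB : semiLocalFn ({∅, {c}} : Set (Set X)) ({a, c} : Set X) = {a} := by
    ext x
    constructor
    · intro hx
      rcases hmem x with h | h | h | h
      · exact h
      · exfalso
        refine hx ({b} : Set X) so_b h (hinI _ (Or.inl ?_))
        ext y
        simp only [Set.mem_inter_iff, Set.mem_singleton_iff, Set.mem_insert_iff,
          Set.mem_empty_iff_false, iff_false, not_and]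
        rintro rfl h
        rcases h with h | h
        · exact hab h.symm
        · exact hbc h
      · exfalso
        refine hx ({b, c} : Set X) so_bc (Or.inr h) (hinI _ (Or.inr ?_))
        ext y
        simp only [Set.mem_inter_iff, Set.mem_insert_iff, Set.mem_singleton_iff]
        constructor
        · rintro ⟨h1 | h1, h2 | h2⟩
          · exact absurd (h1.symm.trans h2) hab.symm
          · subst h1; exact absurd h2 hbc
          · exact h1
          · exact h2
        · rintro rfl; exact ⟨Or.inr rfl, Or.inr rfl⟩
      · exfalso
        refine hx ({b, d} : Set X) so_bd (Or.inr h) (hinI _ (Or.inl ?_))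
        ext y
        simp only [Set.mem_inter_iff, Set.mem_insert_iff, Set.mem_singleton_iff,
          Set.mem_empty_iff_false, iff_false, not_and]
        rintro (rfl | rfl) h
        · rcases h with h | h
          · exact hab h.symm
          · exact hbc h
        · rcases h with h | h
          · exact had h.symm
          · exact hcd h.symm
    · intro hx
      simp only [Set.mem_singleton_iff] at hx
      subst hx
      intro U hU haU
      exact hnotI _ x ⟨haU, Or.inl rfl⟩ hac
  have hsb : semiLocalFn ({∅, {c}} : Set (Set X)) ({b} : Set X) = {b} := by
    ext x
    constructor
    · intro hx
      rcases hmem x with h | h | h | h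
      · exfalso
        refine hx ({a} : Set X) so_a h (hinI _ (Or.inl ?_))
        ext y
        simp only [Set.mem_inter_iff, Set.mem_singleton_iff, Set.mem_empty_iff_false,
          iff_false, not_and]
        rintro rfl h
        exact hab h
      · exact h
      · exfalso
        refine hx ({a, c} : Set X) so_ac (Or.inr h) (hinI _ (Or.inl ?_))
        ext y
        simp only [Set.mem_inter_iff, Set.mem_insert_iff, Set.mem_singleton_iff,
          Set.mem_empty_iff_false, iff_false, not_and]
        rintro (rfl | rfl) h
        · exact hab h
        · exact hbc h.symm
      · exfalso
        refine hx ({a, d} : Set X) so_ad (Or.inr h) (hinI _ (Or.inl ?_))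
        ext y
        simp only [Set.mem_inter_iff, Set.mem_insert_iff, Set.mem_singleton_iff,
          Set.mem_empty_iff_false, iff_false, not_and]
        rintro (rfl | rfl) h
        · exact hab h
        · exact hbd h.symm
    · intro hx
      simp only [Set.mem_singleton_iff] at hx
      subst hx
      intro U hU hbU
      exact hnotI _ x ⟨hbU, rfl⟩ hbc
  have hsA : semiLocalFn ({∅, {c}} : Set (Set X)) ({a, b, c} : Set X) = Set.univ := by
    ext x
    simp only [Set.mem_univ, iff_true]
    intro U hU hxU
    rcases hsoab U hU x hxU with h | h
    · exact hnotI _ a ⟨h, Or.inl rfl⟩ hac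
    · exact hnotI _ b ⟨h, Or.inr (Or.inl rfl)⟩ hbc
  have hDiff : (({a, b, c} : Set X) \ {a, c}) = {b} := by
    ext x
    simp only [Set.mem_diff, Set.mem_insert_iff, Set.mem_singleton_iff]
    constructor
    · rintro ⟨h1 | h1 | h1, h2⟩
      · exact absurd (Or.inl h1) h2
      · exact h1
      · exact absurd (Or.inr h1) h2
    · rintro rfl
      exact ⟨Or.inr (Or.inl rfl), by rintro (h | h); exacts [hab h.symm, hbc h]⟩
  have key2 : semiLocalFn ({∅, {c}} : Set (Set X)) (({a, b, c} : Set X) \ {a, c}) \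
      semiLocalFn ({∅, {c}} : Set (Set X)) {a, c} = {b} := by
    rw [hDiff, hsb, hsB]
    ext x
    simp only [Set.mem_diff, Set.mem_singleton_iff]
    constructor
    · exact fun h => h.1
    · rintro rfl; exact ⟨rfl, fun h => hab h.symm⟩
  have key3 : semiLocalFn ({∅, {c}} : Set (Set X)) ({a, b, c} : Set X) \
      semiLocalFn ({∅, {c}} : Set (Set X)) {a, c} = {b, c, d} := by
    rw [hsA, hsB]
    ext x
    simp only [Set.mem_diff, Set.mem_univ, true_and, Set.mem_singleton_iff,
      Set.mem_insert_iff]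
    constructor
    · intro h
      rcases hmem x with h1 | h1 | h1 | h1
      · exact absurd h1 h
      · exact Or.inl h1
      · exact Or.inr (Or.inl h1)
      · exact Or.inr (Or.inr h1)
    · rintro (rfl | rfl | rfl) h
      · exact hab h.symm
      · exact hac h.symm
      · exact had h.symm
  refine ⟨?_, key2, key3, ?_⟩
  · refine ⟨Or.inl rfl, ?_, ?_⟩
    · intro A B hA hBA
      simp only [Set.mem_insert_iff, Set.mem_singleton_iff] at hA ⊢
      rcases hA with rfl | rfl
      · left; exact Set.subset_empty_iff.1 hBA
      · exact Set.subset_singleton_iff_eq.1 hBA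
    · intro A B hA hB
      simp only [Set.mem_insert_iff, Set.mem_singleton_iff] at hA hB ⊢
      rcases hA with rfl | rfl <;> rcases hB with rfl | rfl <;> simp
  · rw [key2, key3]
    intro h
    have hc : c ∈ ({b, c, d} : Set X) := Or.inr (Or.inl rfl)
    rw [h] at hc
    simp only [Set.mem_singleton_iff] at hc
    exact hbc hc.symm
end

section
/- Let X = {a, b, c, d} be a four-point space whose open sets are exactly ∅, X, {c,d}, {b,c,d}, {a,c,d}, and let I = {∅, {a}}, which is an ideal on X. For A = {a, c, d} and B = {a, c}, one has (A \ B)^{*p} \ B^{*p} = {d} while A^{*p} \ B^{*p} = {a, b, d}; in particular A^{*p} \ B^{*p} ≠ (A \ B)^{*p} \ B^{*p}. -/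
open Set

theorem stmt_8 {X : Type*} [TopologicalSpace X] (a b c d : X)
    (hab : a ≠ b) (hac : a ≠ c) (had : a ≠ d)
    (hbc : b ≠ c) (hbd : b ≠ d) (hcd : c ≠ d)
    (huniv : (Set.univ : Set X) = {a, b, c, d})
    (hopen : {S : Set X | IsOpen S} = {∅, Set.univ, {c, d}, {b, c, d}, {a, c, d}}) :
    IsIdealOn ({∅, {a}} : Set (Set X)) ∧
    preLocalFn ({∅, {a}} : Set (Set X)) (({a, c, d} : Set X) \ {a, c}) \
      preLocalFn ({∅, {a}} : Set (Set X)) {a, c} = {d} ∧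
    preLocalFn ({∅, {a}} : Set (Set X)) {a, c, d} \
      preLocalFn ({∅, {a}} : Set (Set X)) {a, c} = {a, b, d} ∧
    preLocalFn ({∅, {a}} : Set (Set X)) {a, c, d} \
        preLocalFn ({∅, {a}} : Set (Set X)) {a, c} ≠
      preLocalFn ({∅, {a}} : Set (Set X)) (({a, c, d} : Set X) \ {a, c}) \
        preLocalFn ({∅, {a}} : Set (Set X)) {a, c} := by
  have hba := hab.symm; have hca := hac.symm; have hda := had.symm
  have hcb := hbc.symm; have hdb := hbd.symm; have hdc := hcd.symm
  set I : Set (Set X) := {∅, {a}} with hI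
  have memI : ∀ S : Set X, S ∈ I ↔ S = ∅ ∨ S = {a} := by
    intro S; simp [hI]
  have memX : ∀ x : X, x = a ∨ x = b ∨ x = c ∨ x = d := by
    intro x
    have hx : x ∈ (Set.univ : Set X) := trivial
    rw [huniv] at hx; simpa using hx
  have openIff : ∀ S : Set X, IsOpen S ↔
      S = ∅ ∨ S = Set.univ ∨ S = {c, d} ∨ S = {b, c, d} ∨ S = {a, c, d} := by
    intro S
    have h := Set.ext_iff.mp hopen S
    simpa using h
  -- any set containing c or d is preopen
  have key2 : ∀ U : Set X, (c ∈ U ∨ d ∈ U) → PreOpen U := by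
    intro U hU
    have hclosed : IsOpen (closure U)ᶜ := isClosed_closure.isOpen_compl
    have hcd' : c ∈ closure U ∨ d ∈ closure U :=
      hU.imp (fun h => subset_closure h) (fun h => subset_closure h)
    have hcomp : (closure U)ᶜ = ∅ := by
      rcases (openIff _).mp hclosed with h | h | h | h | h
      · exact h
      all_goals
        exfalso
        have hc' : c ∈ (closure U)ᶜ := by rw [h]; simp
        have hd' : d ∈ (closure U)ᶜ := by rw [h]; simp
        rcases hcd' with h' | h'
        · exact hc' h'
        · exact hd' h'
    have hclo : closure U = Set.univ := Set.compl_empty_iff.mp hcomp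
    intro x hx
    rw [hclo, interior_univ]; trivial
  -- nonempty preopen sets meet {c, d}
  have key1 : ∀ U : Set X, ∀ x : X, PreOpen U → x ∈ U → c ∈ U ∨ d ∈ U := by
    intro U x hU hx
    by_contra h
    push_neg at h
    obtain ⟨hcU, hdU⟩ := h
    have hUab : U ⊆ ({a, b} : Set X) := by
      intro y hy
      rcases memX y with h | h | h | h
      · exact Or.inl h
      · exact Or.inr h
      · exact absurd (h ▸ hy) hcU
      · exact absurd (h ▸ hy) hdU
    have habc : ({a, b} : Set X)ᶜ = {c, d} := by
      ext y; rcases memX y with h | h | h | h <;>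
        simp [h, hab, hac, had, hbc, hbd, hcd, hba, hca, hda, hcb, hdb, hdc]
    have habclosed : IsClosed ({a, b} : Set X) := by
      rw [← isOpen_compl_iff, habc]
      exact (openIff _).mpr (Or.inr (Or.inr (Or.inl rfl)))
    have hclsub : closure U ⊆ ({a, b} : Set X) := closure_minimal hUab habclosed
    have hint : interior ({a, b} : Set X) = ∅ := by
      rcases (openIff _).mp isOpen_interior with h | h | h | h | h
      · exact h
      all_goals
        exfalso
        have hc2 : c ∈ interior ({a, b} : Set X) := by rw [h]; simp
        have hmem := interior_subset hc2
        rcases hmem with h' | h'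
        · exact hca h'
        · exact hcb h'
    have hbad : x ∈ (∅ : Set X) := by
      rw [← hint]
      exact interior_mono hclsub (hU hx)
    exact hbad
  -- the ideal property
  have hideal : IsIdealOn I := by
    refine ⟨Set.mem_insert _ _, ?_, ?_⟩
    · intro A B hA hBA
      rcases (memI A).mp hA with rfl | rfl
      · exact (memI B).mpr (Or.inl (Set.subset_empty_iff.mp hBA))
      · rcases Set.subset_singleton_iff_eq.mp hBA with h | h
        · exact (memI B).mpr (Or.inl h)
        · exact (memI B).mpr (Or.inr h)
    · intro A B hA hB
      rcases (memI A).mp hA with rfl | rfl <;> rcases (memI B).mp hB with rfl | rfl <;>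
        apply (memI _).mpr <;> simp
  -- {a,c,d} \ {a,c} = {d}
  have hdiff : (({a, c, d} : Set X) \ {a, c}) = {d} := by
    ext y; rcases memX y with h | h | h | h <;>
      simp [h, hab, hac, had, hbc, hbd, hcd, hba, hca, hda, hcb, hdb, hdc]
  -- preLocalFn I {a,c} = {c}
  have preB : preLocalFn I {a, c} = {c} := by
    ext x
    simp only [preLocalFn, Set.mem_setOf_eq, Set.mem_singleton_iff]
    constructor
    · intro hx
      rcases memX x with h | h | h | h
      · exfalso
        refine hx {a, d} (key2 _ (Or.inr (by simp))) (by simp [h]) ?_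
        apply (memI _).mpr
        right
        ext y; rcases memX y with hy | hy | hy | hy <;>
          simp [hy, hab, hac, had, hbc, hbd, hcd, hba, hca, hda, hcb, hdb, hdc]
      · exfalso
        refine hx {b, d} (key2 _ (Or.inr (by simp))) (by simp [h]) ?_
        apply (memI _).mpr
        left
        ext y; rcases memX y with hy | hy | hy | hy <;>
          simp [hy, hab, hac, had, hbc, hbd, hcd, hba, hca, hda, hcb, hdb, hdc]
      · exact h
      · exfalso
        refine hx {d} (key2 _ (Or.inr (by simp))) (by simp [h]) ?_
        apply (memI _).mpr
        left
        ext y; rcases memX y with hy | hy | hy | hy <;>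
          simp [hy, hab, hac, had, hbc, hbd, hcd, hba, hca, hda, hcb, hdb, hdc]
    · intro hxc U hU hcU hmem
      have hc2 : c ∈ U ∩ ({a, c} : Set X) := ⟨hxc ▸ hcU, by simp⟩
      rcases (memI _).mp hmem with h | h
      · rw [h] at hc2; exact hc2
      · rw [h] at hc2; exact hca hc2
  -- preLocalFn I {d} = {d}
  have preD : preLocalFn I {d} = {d} := by
    ext x
    simp only [preLocalFn, Set.mem_setOf_eq, Set.mem_singleton_iff]
    constructor
    · intro hx
      rcases memX x with h | h | h | h
      · exfalso
        refine hx {a, c} (key2 _ (Or.inl (by simp))) (by simp [h]) ?_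
        apply (memI _).mpr
        left
        ext y; rcases memX y with hy | hy | hy | hy <;>
          simp [hy, hab, hac, had, hbc, hbd, hcd, hba, hca, hda, hcb, hdb, hdc]
      · exfalso
        refine hx {b, c} (key2 _ (Or.inl (by simp))) (by simp [h]) ?_
        apply (memI _).mpr
        left
        ext y; rcases memX y with hy | hy | hy | hy <;>
          simp [hy, hab, hac, had, hbc, hbd, hcd, hba, hca, hda, hcb, hdb, hdc]
      · exfalso
        refine hx {c} (key2 _ (Or.inl (by simp))) (by simp [h]) ?_
        apply (memI _).mpr
        left
        ext y; rcases memX y with hy | hy | hy | hy <;>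
          simp [hy, hab, hac, had, hbc, hbd, hcd, hba, hca, hda, hcb, hdb, hdc]
      · exact h
    · intro hxd U hU hdU hmem
      have hd2 : d ∈ U ∩ ({d} : Set X) := ⟨hxd ▸ hdU, rfl⟩
      rcases (memI _).mp hmem with h | h
      · rw [h] at hd2; exact hd2
      · rw [h] at hd2; exact hda hd2
  -- preLocalFn I {a,c,d} = univ
  have preA : preLocalFn I {a, c, d} = Set.univ := by
    ext x
    simp only [preLocalFn, Set.mem_setOf_eq, Set.mem_univ, iff_true]
    intro U hU hxU hmem
    rcases key1 U x hU hxU with hc' | hd'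
    · have hc2 : c ∈ U ∩ ({a, c, d} : Set X) := ⟨hc', by simp⟩
      rcases (memI _).mp hmem with h | h
      · rw [h] at hc2; exact hc2
      · rw [h] at hc2; exact hca hc2
    · have hd2 : d ∈ U ∩ ({a, c, d} : Set X) := ⟨hd', by simp⟩
      rcases (memI _).mp hmem with h | h
      · rw [h] at hd2; exact hd2
      · rw [h] at hd2; exact hda hd2
  have h2 : preLocalFn I (({a, c, d} : Set X) \ {a, c}) \ preLocalFn I {a, c} = {d} := by
    rw [hdiff, preD, preB]
    ext y; rcases memX y with h | h | h | h <;>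
      simp [h, hab, hac, had, hbc, hbd, hcd, hba, hca, hda, hcb, hdb, hdc]
  have h3 : preLocalFn I {a, c, d} \ preLocalFn I {a, c} = {a, b, d} := by
    rw [preA, preB]
    ext y; rcases memX y with h | h | h | h <;>
      simp [h, hab, hac, had, hbc, hbd, hcd, hba, hca, hda, hcb, hdb, hdc]
  refine ⟨hideal, h2, h3, ?_⟩
  rw [h2, h3]
  intro h
  have hmem : a ∈ ({d} : Set X) := h ▸ (by simp : a ∈ ({a, b, d} : Set X))
  exact had hmem
end

section
/- Let X = {a, b, c, d} be a four-point space whose open sets are exactly ∅, X, {c,d}, {b,c,d}, {a,c,d}, and let I = {∅, {a}}, which is an ideal on X. For A = {b, d} and B = {b, c}, one has ψ_p(A ∩ B) ≠ ψ_p(A) ∩ ψ_p(B). -/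
open Set

theorem stmt_9 {X : Type*} [TopologicalSpace X] (a b c d : X)
    (hab : a ≠ b) (hac : a ≠ c) (had : a ≠ d)
    (hbc : b ≠ c) (hbd : b ≠ d) (hcd : c ≠ d)
    (huniv : (Set.univ : Set X) = {a, b, c, d})
    (hopen : {S : Set X | IsOpen S} = {∅, Set.univ, {c, d}, {b, c, d}, {a, c, d}}) :
    IsIdealOn ({∅, {a}} : Set (Set X)) ∧
    psiP ({∅, {a}} : Set (Set X)) (({b, d} : Set X) ∩ {b, c}) ≠
      psiP ({∅, {a}} : Set (Set X)) {b, d} ∩ psiP ({∅, {a}} : Set (Set X)) {b, c} := by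
  constructor
  · refine ⟨Or.inl rfl, ?_, ?_⟩
    · intro A B hA hB
      rcases hA with rfl | hA
      · left; exact Set.subset_empty_iff.mp hB
      · simp only [Set.mem_singleton_iff] at hA; subst hA
        rcases Set.subset_singleton_iff_eq.mp hB with rfl | rfl
        · left; rfl
        · right; rfl
    · intro A B hA hB
      rcases hA with rfl | hA <;> rcases hB with rfl | hB <;>
        simp_all [Set.mem_singleton_iff]
  · have hmem : ∀ x : X, x = a ∨ x = b ∨ x = c ∨ x = d := by
      intro x
      have : x ∈ (Set.univ : Set X) := Set.mem_univ x
      rw [huniv] at this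
      simpa using this
    have hO : ∀ S : Set X, IsOpen S ↔
        (S = ∅ ∨ S = Set.univ ∨ S = {c, d} ∨ S = {b, c, d} ∨ S = {a, c, d}) := by
      intro S
      have := Set.ext_iff.mp hopen S
      simpa using this
    have hclosedAB : IsClosed ({a, b} : Set X) := by
      have hcompl : ({a, b} : Set X)ᶜ = {c, d} := by
        ext x
        rcases hmem x with rfl | rfl | rfl | rfl <;>
          simp_all [ne_comm, hab, hac, had, hbc, hbd, hcd]
      rw [← isOpen_compl_iff, hcompl]
      exact (hO _).mpr (Or.inr (Or.inr (Or.inl rfl)))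
    -- any preopen set containing b meets {c, d}
    have key : ∀ U : Set X, PreOpen U → b ∈ U → c ∈ U ∨ d ∈ U := by
      intro U hU hbU
      by_contra h
      push_neg at h
      obtain ⟨hc, hd⟩ := h
      have hsub : U ⊆ ({a, b} : Set X) := by
        intro x hx
        rcases hmem x with rfl | rfl | rfl | rfl
        · exact Or.inl rfl
        · exact Or.inr rfl
        · exact absurd hx hc
        · exact absurd hx hd
      have hclU : closure U ⊆ ({a, b} : Set X) := closure_minimal hsub hclosedAB
      have hib : b ∈ interior (closure U) := hU hbU
      have hib2 : b ∈ interior ({a, b} : Set X) := interior_mono hclU hib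
      have hio : IsOpen (interior ({a, b} : Set X)) := isOpen_interior
      have hisub : interior ({a, b} : Set X) ⊆ {a, b} := interior_subset
      rcases (hO _).mp hio with h | h | h | h | h
      · rw [h] at hib2; exact hib2
      · rw [h] at hisub
        have : c ∈ ({a, b} : Set X) := hisub (Set.mem_univ c)
        rcases this with h' | h'
        · exact hac h'.symm
        · exact hbc (Set.mem_singleton_iff.mp h').symm
      · rw [h] at hisub
        have : c ∈ ({a, b} : Set X) := hisub (Or.inl rfl)
        rcases this with h' | h'
        · exact hac h'.symm
        · exact hbc (Set.mem_singleton_iff.mp h').symm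
      · rw [h] at hisub
        have : c ∈ ({a, b} : Set X) := hisub (Or.inr (Or.inl rfl))
        rcases this with h' | h'
        · exact hac h'.symm
        · exact hbc (Set.mem_singleton_iff.mp h').symm
      · rw [h] at hisub
        have : c ∈ ({a, b} : Set X) := hisub (Or.inr (Or.inl rfl))
        rcases this with h' | h'
        · exact hac h'.symm
        · exact hbc (Set.mem_singleton_iff.mp h').symm
    -- closure of {b,d} and {b,c} is univ, hence both are preopen
    have hcl_univ : ∀ S : Set X, b ∈ S → (d ∈ S ∨ c ∈ S) → closure S = Set.univ := by
      intro S hbS hdc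
      have hopenC : IsOpen (closure S)ᶜ := isOpen_compl_iff.mpr isClosed_closure
      have hbC : b ∈ closure S := subset_closure hbS
      rcases (hO _).mp hopenC with h | h | h | h | h
      · rwa [compl_empty_iff] at h
      · exfalso
        have : b ∈ (closure S)ᶜ := h ▸ Set.mem_univ b
        exact this hbC
      · exfalso
        rcases hdc with hdS | hcS
        · have hdC : d ∈ closure S := subset_closure hdS
          have : d ∈ (closure S)ᶜ := h ▸ (Or.inr rfl : d ∈ ({c, d} : Set X))
          exact this hdC
        · have hcC : c ∈ closure S := subset_closure hcS
          have : c ∈ (closure S)ᶜ := h ▸ (Or.inl rfl : c ∈ ({c, d} : Set X))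
          exact this hcC
      · exfalso
        have : b ∈ (closure S)ᶜ := h ▸ (Or.inl rfl : b ∈ ({b, c, d} : Set X))
        exact this hbC
      · exfalso
        rcases hdc with hdS | hcS
        · have hdC : d ∈ closure S := subset_closure hdS
          have : d ∈ (closure S)ᶜ :=
            h ▸ (Or.inr (Or.inr rfl) : d ∈ ({a, c, d} : Set X))
          exact this hdC
        · have hcC : c ∈ closure S := subset_closure hcS
          have : c ∈ (closure S)ᶜ :=
            h ▸ (Or.inr (Or.inl rfl) : c ∈ ({a, c, d} : Set X))
          exact this hcC
    have hpre_bd : PreOpen ({b, d} : Set X) := by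
      intro x hx
      rw [hcl_univ {b, d} (Or.inl rfl) (Or.inl (Or.inr rfl)), interior_univ]
      exact Set.mem_univ x
    have hpre_bc : PreOpen ({b, c} : Set X) := by
      intro x hx
      rw [hcl_univ {b, c} (Or.inl rfl) (Or.inr (Or.inr rfl)), interior_univ]
      exact Set.mem_univ x
    set I : Set (Set X) := {∅, {a}} with hI
    intro heq
    -- b is not in the LHS
    have hbL : b ∉ psiP I (({b, d} : Set X) ∩ {b, c}) := by
      simp only [psiP, Set.mem_compl_iff, not_not]
      intro U hU hbU hUI
      have hciff : ∀ x : X, x ≠ a → x ≠ b → x ∈ U →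
          x ∈ U ∩ (({b, d} : Set X) ∩ {b, c})ᶜ := by
        intro x hxa hxb hxU
        refine ⟨hxU, ?_⟩
        intro hx
        rcases hx.1 with h | h
        · exact hxb h
        · rcases hx.2 with h' | h'
          · exact hxb h'
          · simp only [Set.mem_singleton_iff] at h h'
            exact hcd (h'.symm.trans h)
      rcases key U hU hbU with hcU | hdU
      · have hc' := hciff c (fun h => hac h.symm) (fun h => hbc h.symm) hcU
        rcases hUI with h | h
        · rw [h] at hc'; exact hc'
        · simp only [Set.mem_singleton_iff] at h
          rw [h] at hc'
          exact hac hc'.symm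
      · have hd' := hciff d (fun h => had h.symm) (fun h => hbd h.symm) hdU
        rcases hUI with h | h
        · rw [h] at hd'; exact hd'
        · simp only [Set.mem_singleton_iff] at h
          rw [h] at hd'
          exact had hd'.symm
    -- b is in the RHS
    have hbR : b ∈ psiP I ({b, d} : Set X) ∩ psiP I ({b, c} : Set X) := by
      constructor
      · simp only [psiP, Set.mem_compl_iff]
        intro hall
        exact hall {b, d} hpre_bd (Or.inl rfl)
          (by rw [Set.inter_compl_self]; exact Or.inl rfl)
      · simp only [psiP, Set.mem_compl_iff]
        intro hall
        exact hall {b, c} hpre_bc (Or.inl rfl)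
          (by rw [Set.inter_compl_self]; exact Or.inl rfl)
    rw [heq] at hbL
    exact hbL hbR
end

section
/- Let X = {a, b, c, d} be a four-point space whose open sets are exactly ∅, X, {c,d}, {b,c,d}, {a,c,d}, and let I = {∅, {a}}, which is an ideal on X. For E = {c} and F = {a, b}, one has ψ_p(E ∪ F) ≠ ψ_p(E) ∪ ψ_p(F). -/
open Set

theorem stmt_10 {X : Type*} [TopologicalSpace X] (a b c d : X)
    (hab : a ≠ b) (hac : a ≠ c) (had : a ≠ d)
    (hbc : b ≠ c) (hbd : b ≠ d) (hcd : c ≠ d)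
    (huniv : (Set.univ : Set X) = {a, b, c, d})
    (hopen : {S : Set X | IsOpen S} = {∅, Set.univ, {c, d}, {b, c, d}, {a, c, d}}) :
    IsIdealOn ({∅, {a}} : Set (Set X)) ∧
    psiP ({∅, {a}} : Set (Set X)) (({c} : Set X) ∪ {a, b}) ≠
      psiP ({∅, {a}} : Set (Set X)) {c} ∪ psiP ({∅, {a}} : Set (Set X)) {a, b} := by
  -- Basic membership helpers
  have hmemI : ∀ S : Set X, S ∈ ({∅, {a}} : Set (Set X)) ↔ S = ∅ ∨ S = {a} := by
    intro S; simp [Set.mem_insert_iff]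
  have hIdeal : IsIdealOn ({∅, {a}} : Set (Set X)) := by
    refine ⟨Or.inl rfl, ?_, ?_⟩
    · intro A B hA hBA
      rcases (hmemI A).1 hA with h | h
      · subst h; rw [hmemI]; left; exact Set.subset_empty_iff.1 hBA
      · subst h; rw [hmemI]
        rcases Set.subset_singleton_iff_eq.1 hBA with h' | h'
        · left; exact h'
        · right; exact h'
    · intro A B hA hB
      rcases (hmemI A).1 hA with h | h <;> rcases (hmemI B).1 hB with h' | h' <;>
        subst h <;> subst h' <;> rw [hmemI] <;> simp
  refine ⟨hIdeal, ?_⟩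
  have hopens : ∀ U : Set X, IsOpen U →
      U = ∅ ∨ U = Set.univ ∨ U = {c, d} ∨ U = {b, c, d} ∨ U = {a, c, d} := by
    intro U hU
    have : U ∈ {S : Set X | IsOpen S} := hU
    rw [hopen] at this
    simpa using this
  have hopenCD : IsOpen ({c, d} : Set X) := by
    have : ({c, d} : Set X) ∈ {S : Set X | IsOpen S} := by rw [hopen]; simp
    exact this
  -- closure of {b, c} is univ
  have hclbc : closure ({b, c} : Set X) = Set.univ := by
    apply Set.eq_univ_of_forall
    intro x
    rw [mem_closure_iff]
    intro U hU hxU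
    rcases hopens U hU with h | h | h | h | h <;> subst h
    · exact absurd hxU (by simp)
    · exact ⟨c, by simp⟩
    · exact ⟨c, by simp⟩
    · exact ⟨c, by simp⟩
    · exact ⟨c, by simp⟩
  have hpreBC : PreOpen ({b, c} : Set X) := by
    unfold PreOpen
    rw [hclbc, interior_univ]
    exact Set.subset_univ _
  -- {a,b} is closed
  have hclosedAB : IsClosed ({a, b} : Set X) := by
    rw [← isOpen_compl_iff]
    have hcomp : ({a, b} : Set X)ᶜ = {c, d} := by
      ext x
      have hx : x = a ∨ x = b ∨ x = c ∨ x = d := by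
        have : x ∈ (Set.univ : Set X) := trivial
        rw [huniv] at this; simpa using this
      rcases hx with h | h | h | h <;> subst h <;>
        simp [hab, hac, had, hbc, hbd, hcd, hab.symm, hac.symm, had.symm, hbc.symm,
          hbd.symm, hcd.symm]
    rw [hcomp]; exact hopenCD
  -- interior of {a,b} is empty
  have hintAB : interior ({a, b} : Set X) = ∅ := by
    rw [Set.eq_empty_iff_forall_notMem]
    intro x hx
    rcases mem_interior.1 hx with ⟨U, hUsub, hUopen, hxU⟩
    rcases hopens U hUopen with h | h | h | h | h <;> subst h
    · exact hxU
    · have : c ∈ ({a, b} : Set X) := hUsub trivial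
      simp [hac.symm, hbc.symm] at this
    · have : c ∈ ({a, b} : Set X) := hUsub (by simp)
      simp [hac.symm, hbc.symm] at this
    · have : c ∈ ({a, b} : Set X) := hUsub (by simp)
      simp [hac.symm, hbc.symm] at this
    · have : c ∈ ({a, b} : Set X) := hUsub (by simp)
      simp [hac.symm, hbc.symm] at this
  intro heq
  -- b is in the left side
  have hb1 : b ∈ psiP ({∅, {a}} : Set (Set X)) (({c} : Set X) ∪ {a, b}) := by
    intro hb
    have := hb ({b, c} : Set X) hpreBC (by simp)
    apply this
    rw [hmemI]; left
    rw [Set.eq_empty_iff_forall_notMem]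
    rintro x ⟨hx1, hx2⟩
    apply hx2
    rcases hx1 with h | h <;> subst h <;> simp
  -- b not in psiP of {c}
  have hb2 : b ∉ psiP ({∅, {a}} : Set (Set X)) ({c} : Set X) := by
    intro hb
    apply hb
    intro U hU hbU hI
    have hbmem : b ∈ U ∩ ({c} : Set X)ᶜ := ⟨hbU, by simp [hbc]⟩
    rcases (hmemI _).1 hI with h | h
    · rw [h] at hbmem; exact hbmem
    · rw [h] at hbmem; exact hab (Set.mem_singleton_iff.1 hbmem).symm
  -- b not in psiP of {a, b}
  have hb3 : b ∉ psiP ({∅, {a}} : Set (Set X)) ({a, b} : Set X) := by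
    intro hb
    apply hb
    intro U hU hbU hI
    have hempty : U ∩ ({a, b} : Set X)ᶜ = ∅ := by
      rcases (hmemI _).1 hI with h | h
      · exact h
      · exfalso
        have : a ∈ U ∩ ({a, b} : Set X)ᶜ := h ▸ rfl
        exact this.2 (by simp)
    have hUsub : U ⊆ ({a, b} : Set X) := by
      intro x hx
      by_contra hx'
      exact absurd (Set.eq_empty_iff_forall_notMem.1 hempty x ⟨hx, hx'⟩) not_false
    have : b ∈ interior (closure U) := hU hbU
    have hsub : interior (closure U) ⊆ interior ({a, b} : Set X) :=
      interior_mono (closure_minimal hUsub hclosedAB)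
    rw [hintAB] at hsub
    exact hsub this
  rw [heq] at hb1
  rcases hb1 with h | h
  · exact hb2 h
  · exact hb3 h
end

section
/- Let X = {a, b, c, d} be a four-point space whose open sets are exactly ∅, X, {c,d}, {b,c,d}, {a,c,d}, and let I = {∅, {a}}, which is an ideal on X. Define η = {A ⊆ X : A ⊆ ψ_p(A)}. Then {b, d} ∈ η and {b, c} ∈ η, but {b} = {b,d} ∩ {b,c} ∉ η; in particular η is not closed under binary intersections and hence is not a topology on X. -/
open Set

theorem stmt_11 {X : Type*} [TopologicalSpace X] (a b c d : X)
    (hab : a ≠ b) (hac : a ≠ c) (had : a ≠ d)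
    (hbc : b ≠ c) (hbd : b ≠ d) (hcd : c ≠ d)
    (huniv : (Set.univ : Set X) = {a, b, c, d})
    (hopen : {S : Set X | IsOpen S} = {∅, Set.univ, {c, d}, {b, c, d}, {a, c, d}}) :
    IsIdealOn ({∅, {a}} : Set (Set X)) ∧
    ({b, d} : Set X) ∈ {A : Set X | A ⊆ psiP ({∅, {a}} : Set (Set X)) A} ∧
    ({b, c} : Set X) ∈ {A : Set X | A ⊆ psiP ({∅, {a}} : Set (Set X)) A} ∧
    ({b} : Set X) = ({b, d} : Set X) ∩ {b, c} ∧
    ({b} : Set X) ∉ {A : Set X | A ⊆ psiP ({∅, {a}} : Set (Set X)) A} ∧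
    ¬ (∀ A B : Set X, A ∈ {A : Set X | A ⊆ psiP ({∅, {a}} : Set (Set X)) A} →
        B ∈ {A : Set X | A ⊆ psiP ({∅, {a}} : Set (Set X)) A} →
        A ∩ B ∈ {A : Set X | A ⊆ psiP ({∅, {a}} : Set (Set X)) A}) := by
  have hopen_iff : ∀ U : Set X, IsOpen U ↔
      U = ∅ ∨ U = Set.univ ∨ U = {c, d} ∨ U = {b, c, d} ∨ U = {a, c, d} := by
    intro U
    have := Set.ext_iff.mp hopen U
    simpa [Set.mem_insert_iff] using this
  have hd_mem : ∀ U : Set X, IsOpen U → U.Nonempty → d ∈ U := by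
    intro U hU hne
    rcases (hopen_iff U).mp hU with rfl | rfl | rfl | rfl | rfl
    · exact absurd hne (by simp)
    · trivial
    · simp
    · simp
    · simp
  have hc_mem : ∀ U : Set X, IsOpen U → U.Nonempty → c ∈ U := by
    intro U hU hne
    rcases (hopen_iff U).mp hU with rfl | rfl | rfl | rfl | rfl
    · exact absurd hne (by simp)
    · trivial
    · simp
    · simp
    · simp
  have pre_d : ∀ S : Set X, d ∈ S → PreOpen S := by
    intro S hdS
    have hdense : Dense S := by
      rw [dense_iff_inter_open]
      intro U hU hne
      exact ⟨d, hd_mem U hU hne, hdS⟩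
    intro x _
    rw [hdense.closure_eq]
    simp
  have pre_c : ∀ S : Set X, c ∈ S → PreOpen S := by
    intro S hcS
    have hdense : Dense S := by
      rw [dense_iff_inter_open]
      intro U hU hne
      exact ⟨c, hc_mem U hU hne, hcS⟩
    intro x _
    rw [hdense.closure_eq]
    simp
  have hab_closed : IsClosed ({a, b} : Set X) := by
    rw [← isOpen_compl_iff]
    have : ({a, b} : Set X)ᶜ = {c, d} := by
      ext x
      have hx : x ∈ (Set.univ : Set X) := Set.mem_univ x
      rw [huniv] at hx
      simp only [Set.mem_insert_iff, Set.mem_singleton_iff] at hx ⊢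
      simp only [Set.mem_compl_iff, Set.mem_insert_iff, Set.mem_singleton_iff]
      rcases hx with rfl | rfl | rfl | rfl <;> constructor <;> intro h <;> tauto
    rw [this]
    exact (hopen_iff _).mpr (by tauto)
  have int_ab : interior ({a, b} : Set X) = ∅ := by
    by_contra h
    have hne : (interior ({a, b} : Set X)).Nonempty := Set.nonempty_iff_ne_empty.mpr h
    have := interior_subset (hd_mem _ isOpen_interior hne)
    simp only [Set.mem_insert_iff, Set.mem_singleton_iff] at this
    rcases this with h' | h'
    · exact had h'.symm
    · exact hbd h'.symm
  have pre_empty : ∀ U : Set X, PreOpen U → U ⊆ {a, b} → U = ∅ := by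
    intro U hU hsub
    have hcl : closure U ⊆ {a, b} := closure_minimal hsub hab_closed
    have : U ⊆ interior ({a, b} : Set X) := hU.trans (interior_mono hcl)
    rw [int_ab] at this
    exact Set.subset_empty_iff.mp this
  refine ⟨?_, ?_, ?_, ?_, ?_, ?_⟩
  · refine ⟨Or.inl rfl, ?_, ?_⟩
    · intro A B hA hBA
      simp only [Set.mem_insert_iff, Set.mem_singleton_iff] at hA ⊢
      rcases hA with rfl | rfl
      · exact Or.inl (Set.subset_empty_iff.mp hBA)
      · rcases Set.subset_singleton_iff_eq.mp hBA with h | h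
        · exact Or.inl h
        · exact Or.inr h
    · intro A B hA hB
      simp only [Set.mem_insert_iff, Set.mem_singleton_iff] at hA hB ⊢
      rcases hA with rfl | rfl <;> rcases hB with rfl | rfl <;> simp
  · intro x hx
    simp only [psiP, Set.mem_compl_iff, preLocalFn, Set.mem_setOf_eq]
    push_neg
    refine ⟨{b, d}, pre_d _ (by simp), hx, ?_⟩
    simp
  · intro x hx
    simp only [psiP, Set.mem_compl_iff, preLocalFn, Set.mem_setOf_eq]
    push_neg
    refine ⟨{b, c}, pre_c _ (by simp), hx, ?_⟩
    simp
  · ext x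
    simp only [Set.mem_inter_iff, Set.mem_insert_iff, Set.mem_singleton_iff]
    constructor
    · rintro rfl; tauto
    · rintro ⟨h1 | h1, h2 | h2⟩ <;> first | exact h1 | exact h2 | exact absurd (h2.symm.trans h1) hcd
  · intro h
    have hb : b ∈ psiP ({∅, {a}} : Set (Set X)) {b} := h rfl
    simp only [psiP, Set.mem_compl_iff, preLocalFn, Set.mem_setOf_eq] at hb
    push_neg at hb
    obtain ⟨U, hU, hbU, hUI⟩ := hb
    have hsub : U ⊆ ({a, b} : Set X) := by
      intro x hxU
      by_cases hxb : x = b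
      · simp [hxb]
      · have hxc : x ∈ U ∩ ({b} : Set X)ᶜ := ⟨hxU, by simpa using hxb⟩
        simp only [Set.mem_insert_iff, Set.mem_singleton_iff] at hUI
        rcases hUI with h' | h'
        · rw [h'] at hxc; exact absurd hxc (Set.notMem_empty x)
        · rw [h'] at hxc; exact Set.mem_insert_iff.mpr (Or.inl hxc)
    have := pre_empty U hU hsub
    rw [this] at hbU
    exact hbU
  · intro h
    have h1 : ({b, d} : Set X) ∈ {A : Set X | A ⊆ psiP ({∅, {a}} : Set (Set X)) A} := by
      intro x hx
      simp only [psiP, Set.mem_compl_iff, preLocalFn, Set.mem_setOf_eq]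
      push_neg
      exact ⟨{b, d}, pre_d _ (by simp), hx, by simp⟩
    have h2 : ({b, c} : Set X) ∈ {A : Set X | A ⊆ psiP ({∅, {a}} : Set (Set X)) A} := by
      intro x hx
      simp only [psiP, Set.mem_compl_iff, preLocalFn, Set.mem_setOf_eq]
      push_neg
      exact ⟨{b, c}, pre_c _ (by simp), hx, by simp⟩
    have h3 := h _ _ h1 h2
    have heq : ({b} : Set X) = ({b, d} : Set X) ∩ {b, c} := by
      ext x
      simp only [Set.mem_inter_iff, Set.mem_insert_iff, Set.mem_singleton_iff]
      constructor
      · rintro rfl; tauto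
      · rintro ⟨h1 | h1, h2 | h2⟩ <;> first | exact h1 | exact h2 | exact absurd (h2.symm.trans h1) hcd
    rw [← heq] at h3
    have hb : b ∈ psiP ({∅, {a}} : Set (Set X)) {b} := h3 rfl
    simp only [psiP, Set.mem_compl_iff, preLocalFn, Set.mem_setOf_eq] at hb
    push_neg at hb
    obtain ⟨U, hU, hbU, hUI⟩ := hb
    have hsub : U ⊆ ({a, b} : Set X) := by
      intro x hxU
      by_cases hxb : x = b
      · simp [hxb]
      · have hxc : x ∈ U ∩ ({b} : Set X)ᶜ := ⟨hxU, by simpa using hxb⟩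
        simp only [Set.mem_insert_iff, Set.mem_singleton_iff] at hUI
        rcases hUI with h' | h'
        · rw [h'] at hxc; exact absurd hxc (Set.notMem_empty x)
        · rw [h'] at hxc; exact Set.mem_insert_iff.mpr (Or.inl hxc)
    have := pre_empty U hU hsub
    rw [this] at hbU
    exact hbU
end

section
/- Let X = {a, b, c, d} be a four-point space whose open sets are exactly ∅, X, {a}, {b}, {a,b}, and let I = {∅, {c}}, which is an ideal on X. For A = {a, c} and B = {b, c}, one has ξ_s(A) = {a}, ξ_s(B) = {b}, and ξ_s(A ∪ B) = X; in particular ξ_s(A ∪ B) ≠ ξ_s(A) ∪ ξ_s(B). -/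
open Set

theorem stmt_12 {X : Type*} [TopologicalSpace X] (a b c d : X)
    (hab : a ≠ b) (hac : a ≠ c) (had : a ≠ d)
    (hbc : b ≠ c) (hbd : b ≠ d) (hcd : c ≠ d)
    (huniv : (Set.univ : Set X) = {a, b, c, d})
    (hopen : {S : Set X | IsOpen S} = {∅, Set.univ, {a}, {b}, {a, b}}) :
    IsIdealOn ({∅, {c}} : Set (Set X)) ∧
    xiS ({∅, {c}} : Set (Set X)) {a, c} = {a} ∧
    xiS ({∅, {c}} : Set (Set X)) {b, c} = {b} ∧
    xiS ({∅, {c}} : Set (Set X)) (({a, c} : Set X) ∪ {b, c}) = Set.univ ∧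
    xiS ({∅, {c}} : Set (Set X)) (({a, c} : Set X) ∪ {b, c}) ≠
      xiS ({∅, {c}} : Set (Set X)) {a, c} ∪ xiS ({∅, {c}} : Set (Set X)) {b, c} := by
  -- characterization of open sets
  have hopen' : ∀ S : Set X, IsOpen S ↔
      (S = ∅ ∨ S = Set.univ ∨ S = {a} ∨ S = {b} ∨ S = {a, b}) := by
    intro S
    have := Set.ext_iff.mp hopen S
    simpa using this
  have hoa : IsOpen ({a} : Set X) := (hopen' _).2 (by tauto)
  have hob : IsOpen ({b} : Set X) := (hopen' _).2 (by tauto)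
  -- only univ contains c (resp. d) among open sets
  have hVc : ∀ V : Set X, IsOpen V → c ∈ V → V = Set.univ := by
    intro V hV hc
    rcases (hopen' V).1 hV with h | h | h | h | h
    · exact absurd (h ▸ hc) (Set.notMem_empty c)
    · exact h
    · exact absurd (h ▸ hc) (by simp [Ne.symm hac])
    · exact absurd (h ▸ hc) (by simp [Ne.symm hbc])
    · exact absurd (h ▸ hc) (by simp [Ne.symm hac, Ne.symm hbc])
  have hVd : ∀ V : Set X, IsOpen V → d ∈ V → V = Set.univ := by
    intro V hV hd
    rcases (hopen' V).1 hV with h | h | h | h | h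
    · exact absurd (h ▸ hd) (Set.notMem_empty d)
    · exact h
    · exact absurd (h ▸ hd) (by simp [Ne.symm had])
    · exact absurd (h ▸ hd) (by simp [Ne.symm hbd])
    · exact absurd (h ▸ hd) (by simp [Ne.symm had, Ne.symm hbd])
  -- c and d are in the closure of {a} and of {b}
  have hcls : ∀ x : X, (x = c ∨ x = d) → ∀ y : X, x ∈ closure ({y} : Set X) := by
    intro x hx y
    rw [mem_closure_iff]
    intro o ho hxo
    have : o = Set.univ := by
      rcases hx with h | h
      · exact hVc o ho (h ▸ hxo)
      · exact hVd o ho (h ▸ hxo)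
    exact ⟨y, by simp [this]⟩
  -- nonempty open sets contain a or b
  have hoab : ∀ V : Set X, IsOpen V → V.Nonempty → a ∈ V ∨ b ∈ V := by
    intro V hV hne
    rcases (hopen' V).1 hV with h | h | h | h | h
    · exact absurd (h ▸ hne) (by simp)
    · exact Or.inl (by simp [h])
    · exact Or.inl (by simp [h])
    · exact Or.inr (by simp [h])
    · exact Or.inl (by simp [h])
  -- nonempty semi-open sets contain a or b
  have hsab : ∀ U : Set X, SemiOpen U → U.Nonempty → a ∈ U ∨ b ∈ U := by
    intro U hU ⟨x, hx⟩
    have hxc : x ∈ closure (interior U) := hU hx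
    have hne : (interior U).Nonempty := by
      by_contra h
      rw [Set.not_nonempty_iff_eq_empty] at h
      rw [h, closure_empty] at hxc
      exact hxc
    rcases hoab _ isOpen_interior hne with h | h
    · exact Or.inl (interior_subset h)
    · exact Or.inr (interior_subset h)
  -- semi-open sets we need
  have hsa : SemiOpen ({a} : Set X) := by
    intro x hx; rw [hoa.interior_eq]; exact subset_closure hx
  have hsb : SemiOpen ({b} : Set X) := by
    intro x hx; rw [hob.interior_eq]; exact subset_closure hx
  have hsemi : ∀ x : X, (x = c ∨ x = d) → ∀ y : X, IsOpen ({y} : Set X) →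
      SemiOpen ({y, x} : Set X) := by
    intro x hx y hy
    have h1 : ({y} : Set X) ⊆ interior ({y, x} : Set X) :=
      interior_maximal (by simp) hy
    have h2 : closure ({y} : Set X) ⊆ closure (interior ({y, x} : Set X)) :=
      closure_mono h1
    intro z hz
    rcases hz with hz | hz
    · exact h2 (subset_closure (by simp [hz]))
    · exact h2 (by rw [hz] at *; exact hcls x hx y)
  -- complements
  have hcompA : ({b, c, d} : Set X)ᶜ = {a} := by
    ext x
    simp only [Set.mem_compl_iff, Set.mem_insert_iff, Set.mem_singleton_iff]
    constructor
    · intro h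
      have hx : x ∈ ({a, b, c, d} : Set X) := huniv ▸ Set.mem_univ x
      simp only [Set.mem_insert_iff, Set.mem_singleton_iff] at hx
      tauto
    · intro h; subst h; push_neg; exact ⟨hab, hac, had⟩
  have hcompB : ({a, c, d} : Set X)ᶜ = {b} := by
    ext x
    simp only [Set.mem_compl_iff, Set.mem_insert_iff, Set.mem_singleton_iff]
    constructor
    · intro h
      have hx : x ∈ ({a, b, c, d} : Set X) := huniv ▸ Set.mem_univ x
      simp only [Set.mem_insert_iff, Set.mem_singleton_iff] at hx
      tauto
    · intro h; subst h; push_neg; exact ⟨Ne.symm hab, hbc, hbd⟩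
  have hscA : SemiOpen (({b, c, d} : Set X)ᶜ) := hcompA ▸ hsa
  have hscB : SemiOpen (({a, c, d} : Set X)ᶜ) := hcompB ▸ hsb
  -- sCl facts
  have hsClsub : ∀ U C : Set X, U ⊆ C → SemiOpen Cᶜ → sCl U ⊆ C := by
    intro U C h1 h2
    exact Set.sInter_subset_of_mem ⟨h1, h2⟩
  have hsubsCl : ∀ U : Set X, U ⊆ sCl U := by
    intro U
    exact Set.subset_sInter fun C hC => hC.1
  -- ideal membership criteria
  have hmemI : ∀ s : Set X, s ⊆ {c} → s ∈ ({∅, {c}} : Set (Set X)) := by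
    intro s hs
    simp only [Set.mem_insert_iff, Set.mem_singleton_iff]
    by_cases hc : c ∈ s
    · right; exact Set.Subset.antisymm hs (by simpa using hc)
    · left
      ext x; simp only [Set.mem_empty_iff_false, iff_false]
      intro hx; exact hc ((hs hx) ▸ hx)
  have hnmemI : ∀ s : Set X, ∀ y ∈ s, y ≠ c → s ∉ ({∅, {c}} : Set (Set X)) := by
    intro s y hy hyc h
    simp only [Set.mem_insert_iff, Set.mem_singleton_iff] at h
    rcases h with h | h
    · rw [h] at hy; exact hy
    · rw [h] at hy; exact hyc hy
  -- Part 1: ideal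
  have hideal : IsIdealOn ({∅, {c}} : Set (Set X)) := by
    refine ⟨Or.inl rfl, ?_, ?_⟩
    · intro A B hA hBA
      simp only [Set.mem_insert_iff, Set.mem_singleton_iff] at hA
      rcases hA with h | h
      · left
        rw [h] at hBA
        exact Set.subset_empty_iff.1 hBA
      · exact hmemI B (h ▸ hBA)
    · intro A B hA hB
      simp only [Set.mem_insert_iff, Set.mem_singleton_iff] at hA hB
      rcases hA with h | h <;> rcases hB with h' | h' <;>
        subst h <;> subst h' <;> simp
  -- nonmembership helper: if there is a semi-open U ∋ x with sCl U ∩ A ⊆ {c}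
  -- membership helper used repeatedly
  -- Part 2: xiS {a,c} = {a}
  have hbcd_sub : ∀ y : X, (y = c ∨ y = d) →
      sCl ({b, y} : Set X) ∩ ({a, c} : Set X) ⊆ {c} := by
    intro y hy z hz
    have h1 : sCl ({b, y} : Set X) ⊆ {b, c, d} := by
      apply hsClsub _ _ _ hscA
      intro w hw
      rcases hw with hw | hw
      · exact Or.inl hw
      · simp only [Set.mem_singleton_iff] at hw
        rcases hy with h | h <;> rw [hw, h] <;> simp
    have h2 := h1 hz.1
    have h3 := hz.2
    simp only [Set.mem_insert_iff, Set.mem_singleton_iff] at h2 h3 ⊢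
    rcases h3 with h3 | h3
    · exfalso; rw [h3] at h2
      rcases h2 with h | h | h
      · exact hab h
      · exact hac h
      · exact had h
    · exact h3
  have hacd_sub : ∀ y : X, (y = c ∨ y = d) →
      sCl ({a, y} : Set X) ∩ ({b, c} : Set X) ⊆ {c} := by
    intro y hy z hz
    have h1 : sCl ({a, y} : Set X) ⊆ {a, c, d} := by
      apply hsClsub _ _ _ hscB
      intro w hw
      rcases hw with hw | hw
      · exact Or.inl hw
      · simp only [Set.mem_singleton_iff] at hw
        rcases hy with h | h <;> rw [hw, h] <;> simp
    have h2 := h1 hz.1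
    have h3 := hz.2
    simp only [Set.mem_insert_iff, Set.mem_singleton_iff] at h2 h3 ⊢
    rcases h3 with h3 | h3
    · exfalso; rw [h3] at h2
      rcases h2 with h | h | h
      · exact Ne.symm hab h
      · exact hbc h
      · exact hbd h
    · exact h3
  have hxiA : xiS ({∅, {c}} : Set (Set X)) {a, c} = {a} := by
    ext x
    simp only [xiS, Set.mem_setOf_eq, Set.mem_singleton_iff]
    constructor
    · intro hx
      by_contra hxa
      have hxm : x ∈ ({a, b, c, d} : Set X) := huniv ▸ Set.mem_univ x
      simp only [Set.mem_insert_iff, Set.mem_singleton_iff] at hxm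
      rcases hxm with h | h | h | h
      · exact hxa h
      · -- x = b : use U = {b}
        rw [h] at hx
        have hsub : sCl ({b} : Set X) ∩ ({a, c} : Set X) ⊆ {c} := by
          intro z hz
          have h1 : sCl ({b} : Set X) ⊆ {b, c, d} :=
            hsClsub _ _ (by simp) hscA
          have h2 := h1 hz.1
          have h3 := hz.2
          simp only [Set.mem_insert_iff, Set.mem_singleton_iff] at h2 h3 ⊢
          rcases h3 with h3 | h3
          · exfalso; rw [h3] at h2
            rcases h2 with h | h | h
            · exact hab h
            · exact hac h
            · exact had h
          · exact h3
        exact hx {b} hsb rfl (hmemI _ hsub)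
      · -- x = c : use U = {b, c}
        rw [h] at hx
        exact hx {b, c} (hsemi c (Or.inl rfl) b hob) (by simp)
          (hmemI _ (hbcd_sub c (Or.inl rfl)))
      · -- x = d : use U = {b, d}
        rw [h] at hx
        exact hx {b, d} (hsemi d (Or.inr rfl) b hob) (by simp)
          (hmemI _ (hbcd_sub d (Or.inr rfl)))
    · intro hx U hU hxU
      rw [hx] at hxU
      exact hnmemI _ a ⟨hsubsCl U hxU, Or.inl rfl⟩ hac
  have hxiB : xiS ({∅, {c}} : Set (Set X)) {b, c} = {b} := by
    ext x
    simp only [xiS, Set.mem_setOf_eq, Set.mem_singleton_iff]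
    constructor
    · intro hx
      by_contra hxb
      have hxm : x ∈ ({a, b, c, d} : Set X) := huniv ▸ Set.mem_univ x
      simp only [Set.mem_insert_iff, Set.mem_singleton_iff] at hxm
      rcases hxm with h | h | h | h
      · -- x = a : use U = {a}
        rw [h] at hx
        have hsub : sCl ({a} : Set X) ∩ ({b, c} : Set X) ⊆ {c} := by
          intro z hz
          have h1 : sCl ({a} : Set X) ⊆ {a, c, d} :=
            hsClsub _ _ (by simp) hscB
          have h2 := h1 hz.1
          have h3 := hz.2
          simp only [Set.mem_insert_iff, Set.mem_singleton_iff] at h2 h3 ⊢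
          rcases h3 with h3 | h3
          · exfalso; rw [h3] at h2
            rcases h2 with h | h | h
            · exact Ne.symm hab h
            · exact hbc h
            · exact hbd h
          · exact h3
        exact hx {a} hsa rfl (hmemI _ hsub)
      · exact hxb h
      · rw [h] at hx
        exact hx {a, c} (hsemi c (Or.inl rfl) a hoa) (by simp)
          (hmemI _ (hacd_sub c (Or.inl rfl)))
      · rw [h] at hx
        exact hx {a, d} (hsemi d (Or.inr rfl) a hoa) (by simp)
          (hmemI _ (hacd_sub d (Or.inr rfl)))
    · intro hx U hU hxU
      rw [hx] at hxU
      exact hnmemI _ b ⟨hsubsCl U hxU, Or.inl rfl⟩ hbc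
  have hxiU : xiS ({∅, {c}} : Set (Set X)) (({a, c} : Set X) ∪ {b, c}) = Set.univ := by
    ext x
    simp only [xiS, Set.mem_setOf_eq, Set.mem_univ, iff_true]
    intro U hU hxU
    rcases hsab U hU ⟨x, hxU⟩ with h | h
    · exact hnmemI _ a ⟨hsubsCl U h, Or.inl (Or.inl rfl)⟩ hac
    · exact hnmemI _ b ⟨hsubsCl U h, Or.inr (Or.inl rfl)⟩ hbc
  refine ⟨hideal, hxiA, hxiB, hxiU, ?_⟩
  rw [hxiA, hxiB, hxiU]
  intro h
  have : c ∈ ({a} : Set X) ∪ {b} := h ▸ Set.mem_univ c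
  rcases this with h' | h'
  · exact hac (Eq.symm h')
  · exact hbc (Eq.symm h')
end

section
/- Let X = {a, b, c, d} be a four-point space whose open sets are exactly ∅, X, {c,d}, {b,c,d}, {a,c,d}, and let I = {∅, {a}}, which is an ideal on X. For A = {a, c} and B = {a, d}, one has ξ_β(A) = {c}, ξ_β(B) = {d}, and ξ_β(A ∪ B) = X; in particular ξ_β(A ∪ B) ≠ ξ_β(A) ∪ ξ_β(B). -/
open Set

theorem stmt_13 {X : Type*} [TopologicalSpace X] (a b c d : X)
    (hab : a ≠ b) (hac : a ≠ c) (had : a ≠ d)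
    (hbc : b ≠ c) (hbd : b ≠ d) (hcd : c ≠ d)
    (huniv : (Set.univ : Set X) = {a, b, c, d})
    (hopen : {S : Set X | IsOpen S} = {∅, Set.univ, {c, d}, {b, c, d}, {a, c, d}}) :
    IsIdealOn ({∅, {a}} : Set (Set X)) ∧
    xiB ({∅, {a}} : Set (Set X)) {a, c} = {c} ∧
    xiB ({∅, {a}} : Set (Set X)) {a, d} = {d} ∧
    xiB ({∅, {a}} : Set (Set X)) (({a, c} : Set X) ∪ {a, d}) = Set.univ ∧
    xiB ({∅, {a}} : Set (Set X)) (({a, c} : Set X) ∪ {a, d}) ≠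
      xiB ({∅, {a}} : Set (Set X)) {a, c} ∪ xiB ({∅, {a}} : Set (Set X)) {a, d} := by
  have hmem : ∀ x : X, x = a ∨ x = b ∨ x = c ∨ x = d := by
    intro x
    have hx : x ∈ (Set.univ : Set X) := mem_univ x
    rw [huniv] at hx
    simpa using hx
  have hopen' : ∀ S : Set X, IsOpen S ↔
      S = ∅ ∨ S = univ ∨ S = {c, d} ∨ S = {b, c, d} ∨ S = {a, c, d} := by
    intro S
    have := Set.ext_iff.mp hopen S
    simpa using this
  have hL1 : ∀ U : Set X, IsOpen U → U.Nonempty → c ∈ U ∧ d ∈ U := by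
    intro U hU hne
    rcases (hopen' U).mp hU with rfl | rfl | rfl | rfl | rfl
    · exact absurd hne (by simp)
    · simp
    · simp
    · simp
    · simp
  have hL2 : ∀ S : Set X, (c ∈ S ∨ d ∈ S) → BetaOpen S := by
    intro S hS
    have hclS : closure S = univ := by
      apply eq_univ_iff_forall.mpr
      intro x
      rw [mem_closure_iff]
      intro U hU hxU
      rcases hL1 U hU ⟨x, hxU⟩ with ⟨hc, hd⟩
      rcases hS with h | h
      · exact ⟨c, hc, h⟩
      · exact ⟨d, hd, h⟩
    intro x _
    rw [hclS, interior_univ, closure_univ]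
    trivial
  have hcd_open : IsOpen ({c, d} : Set X) :=
    (hopen' _).mpr (Or.inr (Or.inr (Or.inl rfl)))
  have hab_compl : ({a, b} : Set X)ᶜ = {c, d} := by
    ext y
    simp only [mem_compl_iff, mem_insert_iff, mem_singleton_iff]
    rcases hmem y with hy | hy | hy | hy
    · constructor
      · intro h; exact absurd (Or.inl hy) h
      · rintro (h | h)
        · exact (absurd (hy.symm.trans h) hac : _)
        · exact (absurd (hy.symm.trans h) had : _)
    · constructor
      · intro h; exact absurd (Or.inr hy) h
      · rintro (h | h)
        · exact (absurd (hy.symm.trans h) hbc : _)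
        · exact (absurd (hy.symm.trans h) hbd : _)
    · constructor
      · intro _; exact Or.inl hy
      · rintro _ (h | h)
        · exact hac (h.symm.trans hy)
        · exact hbc (h.symm.trans hy)
    · constructor
      · intro _; exact Or.inr hy
      · rintro _ (h | h)
        · exact had (h.symm.trans hy)
        · exact hbd (h.symm.trans hy)
  have hab_closed : IsClosed ({a, b} : Set X) := by
    rw [← isOpen_compl_iff, hab_compl]; exact hcd_open
  have hL3 : ∀ S : Set X, BetaOpen S → S.Nonempty → c ∈ S ∨ d ∈ S := by
    intro S hβ hne
    by_contra hcon
    push_neg at hcon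
    obtain ⟨hc, hd⟩ := hcon
    have hSab : S ⊆ {a, b} := by
      intro x hx
      rcases hmem x with hy | hy | hy | hy
      · exact Or.inl hy
      · exact Or.inr hy
      · exact absurd (hy ▸ hx) hc
      · exact absurd (hy ▸ hx) hd
    have hcl : closure S ⊆ {a, b} := closure_minimal hSab hab_closed
    have hint : interior (closure S) = ∅ := by
      by_contra hne'
      have hne'' : (interior (closure S)).Nonempty := nonempty_iff_ne_empty.mpr hne'
      have hcmem : c ∈ interior (closure S) := (hL1 _ isOpen_interior hne'').1
      have hcab : c ∈ ({a, b} : Set X) := hcl (interior_subset hcmem)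
      rcases hcab with h | h
      · exact hac h.symm
      · exact hbc h.symm
    obtain ⟨x, hx⟩ := hne
    have := hβ hx
    rw [hint, closure_empty] at this
    exact this
  have hβsub : ∀ U : Set X, U ⊆ betaCl U := by
    intro U x hx
    exact mem_sInter.mpr fun C hC => hC.1 hx
  have hβeq_c : ∀ U : Set X, c ∉ U → betaCl U = U := by
    intro U hc
    exact subset_antisymm (sInter_subset_of_mem ⟨Subset.rfl, hL2 Uᶜ (Or.inl hc)⟩) (hβsub U)
  have hβeq_d : ∀ U : Set X, d ∉ U → betaCl U = U := by
    intro U hd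
    exact subset_antisymm (sInter_subset_of_mem ⟨Subset.rfl, hL2 Uᶜ (Or.inr hd)⟩) (hβsub U)
  have hIof : ∀ S : Set X, S ⊆ {a} → S ∈ ({∅, {a}} : Set (Set X)) := by
    intro S h
    rcases subset_singleton_iff_eq.mp h with h | h
    · exact Or.inl h
    · exact Or.inr h
  have hnotI : ∀ S : Set X, (c ∈ S ∨ d ∈ S) → S ∉ ({∅, {a}} : Set (Set X)) := by
    intro S hS hSI
    rcases hSI with rfl | rfl
    · rcases hS with h | h <;> exact h
    · rcases hS with h | h
      · exact hac h.symm
      · exact had h.symm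
  have hideal : IsIdealOn ({∅, {a}} : Set (Set X)) := by
    refine ⟨Or.inl rfl, ?_, ?_⟩
    · intro A B hA hB
      rcases hA with rfl | rfl
      · exact Or.inl (subset_empty_iff.mp hB)
      · exact hIof B hB
    · intro A B hA hB
      rcases hA with rfl | rfl <;> rcases hB with rfl | rfl <;> simp
  have hxiA : xiB ({∅, {a}} : Set (Set X)) {a, c} = {c} := by
    ext x
    simp only [xiB, mem_setOf_eq, mem_singleton_iff]
    constructor
    · intro hx
      rcases hmem x with hy | hy | hy | hy
      · exfalso
        refine hx {a, d} (hL2 _ (Or.inr (Or.inr rfl))) (Or.inl hy) ?_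
        rw [hβeq_c {a, d} (by rintro (h | h); exacts [hac h.symm, hcd h])]
        refine hIof _ ?_
        rintro y ⟨h1 | h1, h2 | h2⟩
        · exact h1
        · exact h1
        · exact h2
        · exact absurd (h1.symm.trans h2) (fun h => hcd h.symm)
      · exfalso
        refine hx {b, d} (hL2 _ (Or.inr (Or.inr rfl))) (Or.inl hy) ?_
        rw [hβeq_c {b, d} (by rintro (h | h); exacts [hbc h.symm, hcd h])]
        refine hIof _ ?_
        rintro y ⟨h1 | h1, h2 | h2⟩
        · exact absurd (h1.symm.trans h2) (fun h => hab h.symm)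
        · exact absurd (h1.symm.trans h2) (fun h => hbc h)
        · exact absurd (h1.symm.trans h2) (fun h => had h.symm)
        · exact absurd (h1.symm.trans h2) (fun h => hcd h.symm)
      · exact hy
      · exfalso
        refine hx {d} (hL2 _ (Or.inr rfl)) hy ?_
        rw [hβeq_c {d} (fun h => hcd h)]
        refine hIof _ ?_
        rintro y ⟨h1, h2 | h2⟩
        · exact absurd (h1.symm.trans h2) (fun h => had h.symm)
        · exact absurd (h1.symm.trans h2) (fun h => hcd h.symm)
    · rintro hy U hU hcU
      refine hnotI _ (Or.inl ⟨hβsub U ?_, Or.inr rfl⟩)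
      exact hy ▸ hcU
  have hxiBB : xiB ({∅, {a}} : Set (Set X)) {a, d} = {d} := by
    ext x
    simp only [xiB, mem_setOf_eq, mem_singleton_iff]
    constructor
    · intro hx
      rcases hmem x with hy | hy | hy | hy
      · exfalso
        refine hx {a, c} (hL2 _ (Or.inl (Or.inr rfl))) (Or.inl hy) ?_
        rw [hβeq_d {a, c} (by rintro (h | h); exacts [had h.symm, hcd h.symm])]
        refine hIof _ ?_
        rintro y ⟨h1 | h1, h2 | h2⟩
        · exact h1
        · exact h1
        · exact h2
        · exact absurd (h1.symm.trans h2) (fun h => hcd h)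
      · exfalso
        refine hx {b, c} (hL2 _ (Or.inl (Or.inr rfl))) (Or.inl hy) ?_
        rw [hβeq_d {b, c} (by rintro (h | h); exacts [hbd h.symm, hcd h.symm])]
        refine hIof _ ?_
        rintro y ⟨h1 | h1, h2 | h2⟩
        · exact absurd (h1.symm.trans h2) (fun h => hab h.symm)
        · exact absurd (h1.symm.trans h2) (fun h => hbd h)
        · exact absurd (h1.symm.trans h2) (fun h => hac h.symm)
        · exact absurd (h1.symm.trans h2) (fun h => hcd h)
      · exfalso
        refine hx {c} (hL2 _ (Or.inl rfl)) hy ?_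
        rw [hβeq_d {c} (fun h => hcd h.symm)]
        refine hIof _ ?_
        rintro y ⟨h1, h2 | h2⟩
        · exact absurd (h1.symm.trans h2) (fun h => hac h.symm)
        · exact absurd (h1.symm.trans h2) (fun h => hcd h)
      · exact hy
    · rintro hy U hU hdU
      refine hnotI _ (Or.inr ⟨hβsub U ?_, Or.inr rfl⟩)
      exact hy ▸ hdU
  have hxiAB : xiB ({∅, {a}} : Set (Set X)) (({a, c} : Set X) ∪ {a, d}) = Set.univ := by
    apply eq_univ_iff_forall.mpr
    intro x
    simp only [xiB, mem_setOf_eq]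
    intro U hU hxU
    rcases hL3 U hU ⟨x, hxU⟩ with h | h
    · exact hnotI _ (Or.inl ⟨hβsub U h, Or.inl (Or.inr rfl)⟩)
    · exact hnotI _ (Or.inr ⟨hβsub U h, Or.inr (Or.inr rfl)⟩)
  refine ⟨hideal, hxiA, hxiBB, hxiAB, ?_⟩
  rw [hxiAB, hxiA, hxiBB]
  intro h
  have ha : a ∈ ({c} ∪ {d} : Set X) := h ▸ mem_univ a
  rcases ha with h' | h'
  · exact hac h'
  · exact had h'
end

section
/- Let X = {a, b, c, d} be a four-point space whose open sets are exactly ∅, X, {c,d}, {b,c,d}, {a,c,d}, and let I = {∅, {a}}, which is an ideal on X. For E = {a, c} and F = {a, d}, one has ξ_p(E) = {c}, ξ_p(F) = {d}, and ξ_p(E ∪ F) = X; in particular ξ_p(E ∪ F) ≠ ξ_p(E) ∪ ξ_p(F). -/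
open Set

theorem stmt_14 {X : Type*} [TopologicalSpace X] (a b c d : X)
    (hab : a ≠ b) (hac : a ≠ c) (had : a ≠ d)
    (hbc : b ≠ c) (hbd : b ≠ d) (hcd : c ≠ d)
    (huniv : (Set.univ : Set X) = {a, b, c, d})
    (hopen : {S : Set X | IsOpen S} = {∅, Set.univ, {c, d}, {b, c, d}, {a, c, d}}) :
    IsIdealOn ({∅, {a}} : Set (Set X)) ∧
    xiP ({∅, {a}} : Set (Set X)) {a, c} = {c} ∧
    xiP ({∅, {a}} : Set (Set X)) {a, d} = {d} ∧
    xiP ({∅, {a}} : Set (Set X)) (({a, c} : Set X) ∪ {a, d}) = Set.univ ∧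
    xiP ({∅, {a}} : Set (Set X)) (({a, c} : Set X) ∪ {a, d}) ≠
      xiP ({∅, {a}} : Set (Set X)) {a, c} ∪ xiP ({∅, {a}} : Set (Set X)) {a, d} := by
  have hO := Set.ext_iff.mp hopen
  have hIa : ∀ S : Set X, S ⊆ {a} → S ∈ ({∅, {a}} : Set (Set X)) := by
    intro S hS
    rcases Set.subset_singleton_iff_eq.mp hS with h | h <;> simp [h]
  have hnotI : ∀ S : Set X, (∃ y ∈ S, y ≠ a) → S ∉ ({∅, {a}} : Set (Set X)) := by
    rintro S ⟨y, hy, hya⟩ h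
    simp only [mem_insert_iff, mem_singleton_iff] at h
    rcases h with h | h
    · rw [h] at hy; exact hy
    · rw [h] at hy; exact hya hy
  have hclosC : ∀ C : Set X, IsClosed C → c ∈ C → C = univ := by
    intro C hC hcC
    have h2 := (hO Cᶜ).mp hC.isOpen_compl
    have hcc : c ∉ Cᶜ := fun h => h hcC
    rcases h2 with h | h | h | h | h
    · rw [← compl_compl C, h, compl_empty]
    · exact absurd (h ▸ mem_univ c) hcc
    · exact absurd (h ▸ (by simp : c ∈ ({c, d} : Set X))) hcc
    · exact absurd (h ▸ (by simp : c ∈ ({b, c, d} : Set X))) hcc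
    · exact absurd (h ▸ (by simp : c ∈ ({a, c, d} : Set X))) hcc
  have hclosD : ∀ C : Set X, IsClosed C → d ∈ C → C = univ := by
    intro C hC hdC
    have h2 := (hO Cᶜ).mp hC.isOpen_compl
    have hdc : d ∉ Cᶜ := fun h => h hdC
    rcases h2 with h | h | h | h | h
    · rw [← compl_compl C, h, compl_empty]
    · exact absurd (h ▸ mem_univ d) hdc
    · exact absurd (h ▸ (by simp : d ∈ ({c, d} : Set X))) hdc
    · exact absurd (h ▸ (by simp : d ∈ ({b, c, d} : Set X))) hdc
    · exact absurd (h ▸ (by simp : d ∈ ({a, c, d} : Set X))) hdc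
  have hPre : ∀ U : Set X, (c ∈ U ∨ d ∈ U) → PreOpen U := by
    intro U h
    have hcl : closure U = univ := by
      rcases h with h | h
      · exact hclosC _ isClosed_closure (subset_closure h)
      · exact hclosD _ isClosed_closure (subset_closure h)
    rw [PreOpen, hcl, interior_univ]
    exact subset_univ U
  have hpClle : ∀ U C : Set X, U ⊆ C → PreOpen Cᶜ → pCl U ⊆ C :=
    fun U C h1 h2 => sInter_subset_of_mem ⟨h1, h2⟩
  have hsubpCl : ∀ U : Set X, U ⊆ pCl U := fun U => subset_sInter fun C hC => hC.1
  have key : ∀ P Q : Set X, PreOpen Pᶜ → (∀ y, y ∈ P → y ∈ Q → y = a) →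
      pCl P ∩ Q ∈ ({∅, {a}} : Set (Set X)) := by
    intro P Q hP h
    apply hIa
    intro y hy
    exact mem_singleton_iff.mpr (h y (hpClle P P subset_rfl hP hy.1) hy.2)
  have hOpenAB : ∀ S : Set X, IsOpen S → S ⊆ ({a, b} : Set X) → S = ∅ := by
    intro S hS hsub
    have hcab : c ∉ ({a, b} : Set X) := by simp [hac.symm, hbc.symm]
    rcases (hO S).mp hS with h | h | h | h | h
    · exact h
    · exact absurd (hsub (h ▸ mem_univ c)) hcab
    · exact absurd (hsub (h ▸ (by simp : c ∈ ({c, d} : Set X)))) hcab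
    · exact absurd (hsub (h ▸ (by simp : c ∈ ({b, c, d} : Set X)))) hcab
    · exact absurd (hsub (h ▸ (by simp : c ∈ ({a, c, d} : Set X)))) hcab
  have hPreCD : ∀ (U : Set X) (x : X), PreOpen U → x ∈ U → c ∈ U ∨ d ∈ U := by
    intro U x hU hxU
    by_contra h
    push_neg at h
    have hsub : U ⊆ ({a, b} : Set X) := by
      intro y hy
      have hy4 : y ∈ ({a, b, c, d} : Set X) := huniv ▸ mem_univ y
      simp only [mem_insert_iff, mem_singleton_iff] at hy4 ⊢
      rcases hy4 with h1 | h1 | h1 | h1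
      · exact Or.inl h1
      · exact Or.inr h1
      · exact absurd (h1 ▸ hy) h.1
      · exact absurd (h1 ▸ hy) h.2
    have hclsub : closure U ⊆ ({a, b} : Set X) := by
      apply closure_minimal hsub
      rw [← isOpen_compl_iff]
      have hcompl : ({a, b} : Set X)ᶜ = ({c, d} : Set X) := by
        ext y
        have hy4 : y ∈ ({a, b, c, d} : Set X) := huniv ▸ mem_univ y
        simp only [mem_insert_iff, mem_singleton_iff] at hy4
        rcases hy4 with h1 | h1 | h1 | h1 <;> subst h1 <;>
          simp [hab, hac, had, hbc, hbd, hcd, hab.symm, hac.symm, had.symm, hbc.symm,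
            hbd.symm, hcd.symm]
      rw [hcompl]
      exact (hO _).mpr (by simp)
    have hint : interior (closure U) = ∅ :=
      hOpenAB _ isOpen_interior (interior_subset.trans hclsub)
    exact absurd (hint ▸ hU hxU) (notMem_empty x)
  have hx4 : ∀ x : X, x = a ∨ x = b ∨ x = c ∨ x = d := by
    intro x
    have := huniv ▸ mem_univ x
    simpa using this
  have hE : xiP ({∅, {a}} : Set (Set X)) {a, c} = {c} := by
    ext x
    simp only [xiP, mem_setOf_eq, mem_singleton_iff]
    constructor
    · intro hx
      rcases hx4 x with hxe | hxe | hxe | hxe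
      · exfalso
        refine hx {a, d} (hPre _ (Or.inr (by simp))) (by simp [hxe])
          (key {a, d} {a, c} (hPre _ (Or.inl (by simp [hac.symm, hcd]))) ?_)
        intro y h1 h2
        simp only [mem_insert_iff, mem_singleton_iff] at h1 h2
        rcases h1 with rfl | rfl
        · rfl
        · rcases h2 with h2 | h2
          · exact h2
          · exact absurd h2 hcd.symm
      · exfalso
        refine hx {b, d} (hPre _ (Or.inr (by simp))) (by simp [hxe])
          (key {b, d} {a, c} (hPre _ (Or.inl (by simp [hbc.symm, hcd]))) ?_)
        intro y h1 h2
        simp only [mem_insert_iff, mem_singleton_iff] at h1 h2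
        rcases h1 with rfl | rfl
        · rcases h2 with h2 | h2
          · exact h2
          · exact absurd h2 hbc
        · rcases h2 with h2 | h2
          · exact h2
          · exact absurd h2 hcd.symm
      · exact hxe
      · exfalso
        refine hx {d} (hPre _ (Or.inr (by simp))) (by simp [hxe])
          (key {d} {a, c} (hPre _ (Or.inl (by simp [hcd]))) ?_)
        intro y h1 h2
        simp only [mem_singleton_iff, mem_insert_iff] at h1 h2
        subst h1
        rcases h2 with h2 | h2
        · exact h2
        · exact absurd h2 hcd.symm
    · intro hxe U hU hcU
      exact hnotI _ ⟨c, ⟨hsubpCl U (hxe ▸ hcU), by simp⟩, hac.symm⟩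
  have hF : xiP ({∅, {a}} : Set (Set X)) {a, d} = {d} := by
    ext x
    simp only [xiP, mem_setOf_eq, mem_singleton_iff]
    constructor
    · intro hx
      rcases hx4 x with hxe | hxe | hxe | hxe
      · exfalso
        refine hx {a, c} (hPre _ (Or.inl (by simp))) (by simp [hxe])
          (key {a, c} {a, d} (hPre _ (Or.inr (by simp [had.symm, hcd.symm]))) ?_)
        intro y h1 h2
        simp only [mem_insert_iff, mem_singleton_iff] at h1 h2
        rcases h1 with rfl | rfl
        · rfl
        · rcases h2 with h2 | h2
          · exact h2
          · exact absurd h2 hcd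
      · exfalso
        refine hx {b, c} (hPre _ (Or.inl (by simp))) (by simp [hxe])
          (key {b, c} {a, d} (hPre _ (Or.inr (by simp [hbd.symm, hcd.symm]))) ?_)
        intro y h1 h2
        simp only [mem_insert_iff, mem_singleton_iff] at h1 h2
        rcases h1 with rfl | rfl
        · rcases h2 with h2 | h2
          · exact h2
          · exact absurd h2 hbd
        · rcases h2 with h2 | h2
          · exact h2
          · exact absurd h2 hcd
      · exfalso
        refine hx {c} (hPre _ (Or.inl (by simp))) (by simp [hxe])
          (key {c} {a, d} (hPre _ (Or.inr (by simp [hcd.symm]))) ?_)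
        intro y h1 h2
        simp only [mem_singleton_iff, mem_insert_iff] at h1 h2
        subst h1
        rcases h2 with h2 | h2
        · exact h2
        · exact absurd h2 hcd
      · exact hxe
    · intro hxe U hU hdU
      exact hnotI _ ⟨d, ⟨hsubpCl U (hxe ▸ hdU), by simp⟩, had.symm⟩
  have hEF : xiP ({∅, {a}} : Set (Set X)) (({a, c} : Set X) ∪ {a, d}) = Set.univ := by
    rw [eq_univ_iff_forall]
    intro x U hU hxU
    rcases hPreCD U x hU hxU with h | h
    · exact hnotI _ ⟨c, ⟨hsubpCl U h, Or.inl (by simp)⟩, hac.symm⟩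
    · exact hnotI _ ⟨d, ⟨hsubpCl U h, Or.inr (by simp)⟩, had.symm⟩
  refine ⟨⟨by simp, ?_, ?_⟩, hE, hF, hEF, ?_⟩
  · intro A B hA hB
    simp only [mem_insert_iff, mem_singleton_iff] at hA
    rcases hA with h | h
    · rw [h] at hB
      rw [Set.subset_empty_iff.mp hB]
      simp
    · exact hIa B (h ▸ hB)
  · intro A B hA hB
    simp only [mem_insert_iff, mem_singleton_iff] at hA hB
    have h1 : A ⊆ {a} := by rcases hA with h | h <;> simp [h]
    have h2 : B ⊆ {a} := by rcases hB with h | h <;> simp [h]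
    exact hIa _ (union_subset h1 h2)
  · intro h
    rw [hE, hF, hEF] at h
    have ha : a ∈ ({c} : Set X) ∪ {d} := h ▸ mem_univ a
    rcases ha with h1 | h1 <;> simp only [mem_singleton_iff] at h1
    · exact hac h1
    · exact had h1
end

section
/- Let X = {a, b, c, d} be a four-point space whose open sets are exactly ∅, X, {a}, {b}, {a,b}, and let I = {∅, {c}}, which is an ideal on X. For A = {b, d} and B = {a, d}, one has ψ_{ξ_s}(A) = {b, c, d}, ψ_{ξ_s}(B) = {a, c, d}, and ψ_{ξ_s}(A ∩ B) = ∅; in particular ψ_{ξ_s}(A ∩ B) ≠ ψ_{ξ_s}(A) ∩ ψ_{ξ_s}(B). -/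
open Set

theorem stmt_15 {X : Type*} [TopologicalSpace X] (a b c d : X)
    (hab : a ≠ b) (hac : a ≠ c) (had : a ≠ d)
    (hbc : b ≠ c) (hbd : b ≠ d) (hcd : c ≠ d)
    (huniv : (Set.univ : Set X) = {a, b, c, d})
    (hopen : {S : Set X | IsOpen S} = {∅, Set.univ, {a}, {b}, {a, b}}) :
    IsIdealOn ({∅, {c}} : Set (Set X)) ∧
    psiXiS ({∅, {c}} : Set (Set X)) {b, d} = {b, c, d} ∧
    psiXiS ({∅, {c}} : Set (Set X)) {a, d} = {a, c, d} ∧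
    psiXiS ({∅, {c}} : Set (Set X)) (({b, d} : Set X) ∩ {a, d}) = ∅ ∧
    psiXiS ({∅, {c}} : Set (Set X)) (({b, d} : Set X) ∩ {a, d}) ≠
      psiXiS ({∅, {c}} : Set (Set X)) {b, d} ∩ psiXiS ({∅, {c}} : Set (Set X)) {a, d} := by

  -- basic consequences of the hypotheses
  have hcomp : ∀ x : X, x = a ∨ x = b ∨ x = c ∨ x = d := by
    intro x
    have hx : x ∈ (Set.univ : Set X) := mem_univ x
    rw [huniv] at hx
    simpa using hx
  have hOa : IsOpen ({a} : Set X) := by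
    have : ({a} : Set X) ∈ {S : Set X | IsOpen S} := by rw [hopen]; simp
    exact this
  have hOb : IsOpen ({b} : Set X) := by
    have : ({b} : Set X) ∈ {S : Set X | IsOpen S} := by rw [hopen]; simp
    exact this
  have hmemopen : ∀ U : Set X, IsOpen U →
      U = ∅ ∨ U = Set.univ ∨ U = {a} ∨ U = {b} ∨ U = {a, b} := by
    intro U hU
    have : U ∈ ({∅, Set.univ, {a}, {b}, {a, b}} : Set (Set X)) := by
      rw [← hopen]; exact hU
    simpa using this
  have hUc : ∀ U : Set X, IsOpen U → c ∈ U → a ∈ U ∧ b ∈ U := by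
    intro U hU hc
    rcases hmemopen U hU with rfl | rfl | rfl | rfl | rfl
    · exact absurd hc (notMem_empty c)
    · exact ⟨mem_univ a, mem_univ b⟩
    · rw [mem_singleton_iff] at hc; exact absurd hc.symm hac
    · rw [mem_singleton_iff] at hc; exact absurd hc.symm hbc
    · rcases hc with rfl | hc
      · exact absurd rfl hac.symm
      · rw [mem_singleton_iff] at hc; exact absurd hc.symm hbc
  have hUd : ∀ U : Set X, IsOpen U → d ∈ U → a ∈ U ∧ b ∈ U := by
    intro U hU hd
    rcases hmemopen U hU with rfl | rfl | rfl | rfl | rfl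
    · exact absurd hd (notMem_empty d)
    · exact ⟨mem_univ a, mem_univ b⟩
    · rw [mem_singleton_iff] at hd; exact absurd hd.symm had
    · rw [mem_singleton_iff] at hd; exact absurd hd.symm hbd
    · rcases hd with rfl | hd
      · exact absurd rfl had.symm
      · rw [mem_singleton_iff] at hd; exact absurd hd.symm hbd
  have hL2 : ∀ U : Set X, IsOpen U → U.Nonempty → a ∈ U ∨ b ∈ U := by
    intro U hU hne
    rcases hmemopen U hU with rfl | rfl | rfl | rfl | rfl
    · exact absurd hne (by simp)
    · exact Or.inl (mem_univ a)
    · exact Or.inl rfl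
    · exact Or.inr rfl
    · exact Or.inl (Or.inl rfl)
  -- closure facts
  have hclA : ({a, c, d} : Set X) ⊆ closure ({a} : Set X) := by
    intro x hx
    rcases hx with rfl | rfl | hx
    · exact subset_closure rfl
    · rw [mem_closure_iff]
      intro U hU hcU
      exact ⟨a, (hUc U hU hcU).1, rfl⟩
    · rw [mem_singleton_iff] at hx; subst hx
      rw [mem_closure_iff]
      intro U hU hdU
      exact ⟨a, (hUd U hU hdU).1, rfl⟩
  have hclB : ({b, c, d} : Set X) ⊆ closure ({b} : Set X) := by
    intro x hx
    rcases hx with rfl | rfl | hx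
    · exact subset_closure rfl
    · rw [mem_closure_iff]
      intro U hU hcU
      exact ⟨b, (hUc U hU hcU).2, rfl⟩
    · rw [mem_singleton_iff] at hx; subst hx
      rw [mem_closure_iff]
      intro U hU hdU
      exact ⟨b, (hUd U hU hdU).2, rfl⟩
  -- semi-open helpers
  have semiA : ∀ S : Set X, a ∈ S → S ⊆ {a, c, d} → SemiOpen S := by
    intro S haS hS
    have h1 : ({a} : Set X) ⊆ interior S :=
      interior_maximal (singleton_subset_iff.mpr haS) hOa
    exact hS.trans (hclA.trans (closure_mono h1))
  have semiB : ∀ S : Set X, b ∈ S → S ⊆ {b, c, d} → SemiOpen S := by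
    intro S hbS hS
    have h1 : ({b} : Set X) ⊆ interior S :=
      interior_maximal (singleton_subset_iff.mpr hbS) hOb
    exact hS.trans (hclB.trans (closure_mono h1))
  -- sCl helpers
  have hUsub : ∀ U : Set X, U ⊆ sCl U := fun U => subset_sInter fun C hC => hC.1
  have hsClsub : ∀ U C : Set X, U ⊆ C → SemiOpen Cᶜ → sCl U ⊆ C := by
    intro U C h1 h2
    exact sInter_subset_of_mem ⟨h1, h2⟩
  -- ideal membership helpers
  have hnotIa : ∀ T : Set X, a ∈ T → T ∉ ({∅, {c}} : Set (Set X)) := by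
    rintro T ha (rfl | rfl)
    · exact ha
    · rw [mem_singleton_iff] at ha; exact hac ha
  have hnotIb : ∀ T : Set X, b ∈ T → T ∉ ({∅, {c}} : Set (Set X)) := by
    rintro T hb (rfl | rfl)
    · exact hb
    · rw [mem_singleton_iff] at hb; exact hbc hb
  have hinI : ∀ T : Set X, T ⊆ {c} → T ∈ ({∅, {c}} : Set (Set X)) := by
    intro T h
    rcases subset_singleton_iff_eq.mp h with rfl | rfl
    · exact Or.inl rfl
    · exact Or.inr rfl
  -- the ideal
  have hI : IsIdealOn ({∅, {c}} : Set (Set X)) := by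
    refine ⟨Or.inl rfl, ?_, ?_⟩
    · rintro A B (rfl | rfl) hBA
      · exact Or.inl (subset_empty_iff.mp hBA)
      · exact hinI B hBA
    · rintro A B (rfl | rfl) (rfl | rfl) <;> simp
  -- semi-open sets we need, and their sCl bounds
  have semiBopen : SemiOpen ({b} : Set X) := semiB {b} rfl (by intro x hx; exact Or.inl hx)
  have semiBcompl : SemiOpen (({b} : Set X)ᶜ) := by
    refine semiA _ hab ?_
    intro x hx
    rcases hcomp x with rfl | rfl | rfl | rfl
    · exact Or.inl rfl
    · exact absurd rfl hx
    · exact Or.inr (Or.inl rfl)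
    · exact Or.inr (Or.inr rfl)
  have semiAopen : SemiOpen ({a} : Set X) := semiA {a} rfl (by intro x hx; exact Or.inl hx)
  have semiAcompl : SemiOpen (({a} : Set X)ᶜ) := by
    refine semiB _ (fun h => hab h.symm) ?_
    intro x hx
    rcases hcomp x with rfl | rfl | rfl | rfl
    · exact absurd rfl hx
    · exact Or.inl rfl
    · exact Or.inr (Or.inl rfl)
    · exact Or.inr (Or.inr rfl)
  have semiBC : SemiOpen ({b, c} : Set X) := semiB _ (Or.inl rfl)
    (by rintro x (rfl | hx); exacts [Or.inl rfl, Or.inr (Or.inl hx)])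
  have semiBCcompl : SemiOpen (({b, c} : Set X)ᶜ) := by
    refine semiA _ ?_ ?_
    · rintro (h | h)
      · exact hab h
      · rw [mem_singleton_iff] at h; exact hac h
    · intro x hx
      rcases hcomp x with rfl | rfl | rfl | rfl
      · exact Or.inl rfl
      · exact absurd (Or.inl rfl) hx
      · exact absurd (Or.inr rfl) hx
      · exact Or.inr (Or.inr rfl)
  have semiBD : SemiOpen ({b, d} : Set X) := semiB _ (Or.inl rfl)
    (by rintro x (rfl | hx); exacts [Or.inl rfl, Or.inr (Or.inr hx)])
  have semiBDcompl : SemiOpen (({b, d} : Set X)ᶜ) := by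
    refine semiA _ ?_ ?_
    · rintro (h | h)
      · exact hab h
      · rw [mem_singleton_iff] at h; exact had h
    · intro x hx
      rcases hcomp x with rfl | rfl | rfl | rfl
      · exact Or.inl rfl
      · exact absurd (Or.inl rfl) hx
      · exact Or.inr (Or.inl rfl)
      · exact absurd (Or.inr rfl) hx
  have semiAC : SemiOpen ({a, c} : Set X) := semiA _ (Or.inl rfl)
    (by rintro x (rfl | hx); exacts [Or.inl rfl, Or.inr (Or.inl hx)])
  have semiACcompl : SemiOpen (({a, c} : Set X)ᶜ) := by
    refine semiB _ ?_ ?_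
    · rintro (h | h)
      · exact hab h.symm
      · rw [mem_singleton_iff] at h; exact hbc h
    · intro x hx
      rcases hcomp x with rfl | rfl | rfl | rfl
      · exact absurd (Or.inl rfl) hx
      · exact Or.inl rfl
      · exact absurd (Or.inr rfl) hx
      · exact Or.inr (Or.inr rfl)
  have semiAD : SemiOpen ({a, d} : Set X) := semiA _ (Or.inl rfl)
    (by rintro x (rfl | hx); exacts [Or.inl rfl, Or.inr (Or.inr hx)])
  have semiADcompl : SemiOpen (({a, d} : Set X)ᶜ) := by
    refine semiB _ ?_ ?_
    · rintro (h | h)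
      · exact hab h.symm
      · rw [mem_singleton_iff] at h; exact hbd h
    · intro x hx
      rcases hcomp x with rfl | rfl | rfl | rfl
      · exact absurd (Or.inl rfl) hx
      · exact Or.inl rfl
      · exact Or.inr (Or.inl rfl)
      · exact absurd (Or.inr rfl) hx
  -- complements of the two main sets
  have hAc : (({b, d} : Set X)ᶜ) = {a, c} := by
    ext x
    rcases hcomp x with rfl | rfl | rfl | rfl <;>
      simp [hab, hac, had, hbc, hbd, hcd, hab.symm, hac.symm, had.symm,
        hbc.symm, hbd.symm, hcd.symm]
  have hBc : (({a, d} : Set X)ᶜ) = {b, c} := by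
    ext x
    rcases hcomp x with rfl | rfl | rfl | rfl <;>
      simp [hab, hac, had, hbc, hbd, hcd, hab.symm, hac.symm, had.symm,
        hbc.symm, hbd.symm, hcd.symm]
  have hABc : ((({b, d} : Set X) ∩ {a, d})ᶜ) = {a, b, c} := by
    ext x
    rcases hcomp x with rfl | rfl | rfl | rfl <;>
      simp [hab, hac, had, hbc, hbd, hcd, hab.symm, hac.symm, had.symm,
        hbc.symm, hbd.symm, hcd.symm]
  -- xiS computations
  have key1 : xiS ({∅, {c}} : Set (Set X)) ({a, c} : Set X) = {a} := by
    ext x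
    constructor
    · intro hx
      rcases hcomp x with h | h | h | h <;> subst x
      · exact rfl
      · exfalso
        refine hx {b} semiBopen rfl (hinI _ ?_)
        rintro y ⟨hy1, hy2⟩
        have hyb : y = b := hsClsub {b} {b} Subset.rfl semiBcompl hy1
        subst hyb
        rcases hy2 with h | h
        · exact absurd h.symm hab
        · rw [mem_singleton_iff] at h; exact absurd h hbc
      · exfalso
        refine hx {b, c} semiBC (Or.inr rfl) (hinI _ ?_)
        rintro y ⟨hy1, hy2⟩
        have hy : y ∈ ({b, c} : Set X) :=
          hsClsub {b, c} {b, c} Subset.rfl semiBCcompl hy1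
        rcases hy with rfl | hy
        · rcases hy2 with h | h
          · exact absurd h.symm hab
          · rw [mem_singleton_iff] at h; exact absurd h hbc
        · exact hy
      · exfalso
        refine hx {b, d} semiBD (Or.inr rfl) (hinI _ ?_)
        rintro y ⟨hy1, hy2⟩
        have hy : y ∈ ({b, d} : Set X) :=
          hsClsub {b, d} {b, d} Subset.rfl semiBDcompl hy1
        exfalso
        rcases hy with rfl | hy
        · rcases hy2 with h | h
          · exact hab h.symm
          · rw [mem_singleton_iff] at h; exact hbc h
        · rw [mem_singleton_iff] at hy; subst hy
          rcases hy2 with h | h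
          · exact had h.symm
          · rw [mem_singleton_iff] at h; exact hcd h.symm
    · rintro rfl
      intro U hU haU
      exact hnotIa _ ⟨hUsub U haU, Or.inl rfl⟩
  have key2 : xiS ({∅, {c}} : Set (Set X)) ({b, c} : Set X) = {b} := by
    ext x
    constructor
    · intro hx
      rcases hcomp x with h | h | h | h <;> subst x
      · exfalso
        refine hx {a} semiAopen rfl (hinI _ ?_)
        rintro y ⟨hy1, hy2⟩
        have hya : y = a := hsClsub {a} {a} Subset.rfl semiAcompl hy1
        subst hya
        rcases hy2 with h | h
        · exact absurd h hab
        · rw [mem_singleton_iff] at h; exact absurd h hac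
      · exact rfl
      · exfalso
        refine hx {a, c} semiAC (Or.inr rfl) (hinI _ ?_)
        rintro y ⟨hy1, hy2⟩
        have hy : y ∈ ({a, c} : Set X) :=
          hsClsub {a, c} {a, c} Subset.rfl semiACcompl hy1
        rcases hy with rfl | hy
        · rcases hy2 with h | h
          · exact absurd h hab
          · rw [mem_singleton_iff] at h; exact absurd h hac
        · exact hy
      · exfalso
        refine hx {a, d} semiAD (Or.inr rfl) (hinI _ ?_)
        rintro y ⟨hy1, hy2⟩
        have hy : y ∈ ({a, d} : Set X) :=
          hsClsub {a, d} {a, d} Subset.rfl semiADcompl hy1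
        exfalso
        rcases hy with rfl | hy
        · rcases hy2 with h | h
          · exact hab h
          · rw [mem_singleton_iff] at h; exact hac h
        · rw [mem_singleton_iff] at hy; subst hy
          rcases hy2 with h | h
          · exact hbd h.symm
          · rw [mem_singleton_iff] at h; exact hcd h.symm
    · rintro rfl
      intro U hU hbU
      exact hnotIb _ ⟨hUsub U hbU, Or.inl rfl⟩
  have key3 : xiS ({∅, {c}} : Set (Set X)) ({a, b, c} : Set X) = Set.univ := by
    ext x
    simp only [mem_univ, iff_true]
    intro U hU hxU
    have hint : (interior U).Nonempty := by
      by_contra hcon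
      rw [not_nonempty_iff_eq_empty] at hcon
      have := hU hxU
      rw [hcon, closure_empty] at this
      exact this
    rcases hL2 (interior U) isOpen_interior hint with h | h
    · exact hnotIa _ ⟨hUsub U (interior_subset h), Or.inl rfl⟩
    · exact hnotIb _ ⟨hUsub U (interior_subset h), Or.inr (Or.inl rfl)⟩
  -- psiXiS computations
  have hpsi1 : psiXiS ({∅, {c}} : Set (Set X)) {b, d} = {b, c, d} := by
    unfold psiXiS
    rw [hAc, key1]
    ext x
    rcases hcomp x with rfl | rfl | rfl | rfl <;>
      simp [hab, hac, had, hbc, hbd, hcd, hab.symm, hac.symm, had.symm,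
        hbc.symm, hbd.symm, hcd.symm]
  have hpsi2 : psiXiS ({∅, {c}} : Set (Set X)) {a, d} = {a, c, d} := by
    unfold psiXiS
    rw [hBc, key2]
    ext x
    rcases hcomp x with rfl | rfl | rfl | rfl <;>
      simp [hab, hac, had, hbc, hbd, hcd, hab.symm, hac.symm, had.symm,
        hbc.symm, hbd.symm, hcd.symm]
  have hpsi3 : psiXiS ({∅, {c}} : Set (Set X)) (({b, d} : Set X) ∩ {a, d}) = ∅ := by
    unfold psiXiS
    rw [hABc, key3, compl_univ]
  refine ⟨hI, hpsi1, hpsi2, hpsi3, ?_⟩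
  rw [hpsi1, hpsi2, hpsi3]
  intro h
  have hcmem : c ∈ (∅ : Set X) := by
    rw [h]
    exact ⟨Or.inr (Or.inl rfl), Or.inr (Or.inl rfl)⟩
  exact hcmem
end

section
/- Let X = {a, b, c, d} be a four-point space whose open sets are exactly ∅, X, {a}, {b}, {a,b}, and let I = {∅, {c}}, which is an ideal on X. Define σ_{ξ_s} = {A ⊆ X : A ⊆ ψ_{ξ_s}(A)}. Then {b, d} ∈ σ_{ξ_s} and {a, d} ∈ σ_{ξ_s}, but {d} = {b,d} ∩ {a,d} ∉ σ_{ξ_s}; in particular σ_{ξ_s} is not closed under binary intersections and hence is not a topology on X. -/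
open Set

theorem stmt_16 {X : Type*} [TopologicalSpace X] (a b c d : X)
    (hab : a ≠ b) (hac : a ≠ c) (had : a ≠ d)
    (hbc : b ≠ c) (hbd : b ≠ d) (hcd : c ≠ d)
    (huniv : (Set.univ : Set X) = {a, b, c, d})
    (hopen : {S : Set X | IsOpen S} = {∅, Set.univ, {a}, {b}, {a, b}}) :
    IsIdealOn ({∅, {c}} : Set (Set X)) ∧
    ({b, d} : Set X) ∈ {A : Set X | A ⊆ psiXiS ({∅, {c}} : Set (Set X)) A} ∧
    ({a, d} : Set X) ∈ {A : Set X | A ⊆ psiXiS ({∅, {c}} : Set (Set X)) A} ∧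
    ({d} : Set X) = ({b, d} : Set X) ∩ {a, d} ∧
    ({d} : Set X) ∉ {A : Set X | A ⊆ psiXiS ({∅, {c}} : Set (Set X)) A} ∧
    ¬ (∀ A B : Set X, A ∈ {A : Set X | A ⊆ psiXiS ({∅, {c}} : Set (Set X)) A} →
        B ∈ {A : Set X | A ⊆ psiXiS ({∅, {c}} : Set (Set X)) A} →
        A ∩ B ∈ {A : Set X | A ⊆ psiXiS ({∅, {c}} : Set (Set X)) A}) := by
  
  classical
  -- Basic combinatorial facts
  have hopen_iff : ∀ S : Set X, IsOpen S ↔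
      (S = ∅ ∨ S = univ ∨ S = {a} ∨ S = {b} ∨ S = ({a, b} : Set X)) := by
    intro S
    have := Set.ext_iff.mp hopen S
    simpa using this
  have openA : IsOpen ({a} : Set X) := (hopen_iff {a}).2 (by tauto)
  have openB : IsOpen ({b} : Set X) := (hopen_iff {b}).2 (by tauto)
  have univ_cases : ∀ x : X, x = a ∨ x = b ∨ x = c ∨ x = d := by
    intro x
    have := (Set.ext_iff.mp huniv x).1 (mem_univ x)
    simpa using this
  have memI : ∀ S : Set X, S ∈ ({∅, {c}} : Set (Set X)) ↔ S = ∅ ∨ S = {c} := by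
    intro S; simp
  -- every open set containing c or d contains both a and b
  have key : ∀ o : Set X, IsOpen o → ∀ x, x ∈ o → (x = c ∨ x = d) → a ∈ o ∧ b ∈ o := by
    intro o ho x hx hcd
    rcases (hopen_iff o).1 ho with h | h | h | h | h <;> subst h
    · exact absurd hx (notMem_empty x)
    · exact ⟨mem_univ a, mem_univ b⟩
    · rw [mem_singleton_iff] at hx
      rcases hcd with rfl | rfl
      · exact absurd hx.symm hac
      · exact absurd hx.symm had
    · rw [mem_singleton_iff] at hx
      rcases hcd with rfl | rfl
      · exact absurd hx.symm hbc
      · exact absurd hx.symm hbd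
    · simp only [mem_insert_iff, mem_singleton_iff] at hx
      rcases hx with hx | hx <;> rcases hcd with rfl | rfl
      · exact absurd hx.symm hac
      · exact absurd hx.symm had
      · exact absurd hx.symm hbc
      · exact absurd hx.symm hbd
  have clA : ∀ x : X, (x = c ∨ x = d) → x ∈ closure ({a} : Set X) := by
    intro x hx
    rw [mem_closure_iff]
    intro o ho hxo
    exact ⟨a, (key o ho x hxo hx).1, rfl⟩
  have clB : ∀ x : X, (x = c ∨ x = d) → x ∈ closure ({b} : Set X) := by
    intro x hx
    rw [mem_closure_iff]
    intro o ho hxo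
    exact ⟨b, (key o ho x hxo hx).2, rfl⟩
  -- sCl lemmas
  have sub_sCl : ∀ A : Set X, A ⊆ sCl A := fun A =>
    subset_sInter (fun C hC => hC.1)
  have sCl_sub : ∀ A C : Set X, A ⊆ C → SemiOpen Cᶜ → sCl A ⊆ C := fun A C h1 h2 =>
    sInter_subset_of_mem ⟨h1, h2⟩
  -- semi-openness facts
  have soBD : SemiOpen ({b, d} : Set X) := by
    have hsub : ({b} : Set X) ⊆ interior ({b, d} : Set X) :=
      interior_maximal (by simp) openB
    intro x hx
    apply closure_mono hsub
    rcases hx with rfl | hx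
    · exact subset_closure rfl
    · rw [mem_singleton_iff] at hx
      exact clB x (Or.inr hx)
  have soAD : SemiOpen ({a, d} : Set X) := by
    have hsub : ({a} : Set X) ⊆ interior ({a, d} : Set X) :=
      interior_maximal (by simp) openA
    intro x hx
    apply closure_mono hsub
    rcases hx with rfl | hx
    · exact subset_closure rfl
    · rw [mem_singleton_iff] at hx
      exact clA x (Or.inr hx)
  have soBDc : SemiOpen (({b, d} : Set X)ᶜ) := by
    have hsubA : ({a} : Set X) ⊆ ({b, d} : Set X)ᶜ := by
      intro x hx
      rw [mem_singleton_iff] at hx; subst hx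
      simp [hab, had]
    have hsub : ({a} : Set X) ⊆ interior (({b, d} : Set X)ᶜ) :=
      interior_maximal hsubA openA
    intro x hx
    apply closure_mono hsub
    rcases univ_cases x with rfl | rfl | rfl | rfl
    · exact subset_closure rfl
    · exact absurd (Or.inl rfl) hx
    · exact clA _ (Or.inl rfl)
    · exact absurd (Or.inr rfl) hx
  have soADc : SemiOpen (({a, d} : Set X)ᶜ) := by
    have hsubB : ({b} : Set X) ⊆ ({a, d} : Set X)ᶜ := by
      intro x hx
      rw [mem_singleton_iff] at hx; subst hx
      simp [hab.symm, hbd]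
    have hsub : ({b} : Set X) ⊆ interior (({a, d} : Set X)ᶜ) :=
      interior_maximal hsubB openB
    intro x hx
    apply closure_mono hsub
    rcases univ_cases x with rfl | rfl | rfl | rfl
    · exact absurd (Or.inl rfl) hx
    · exact subset_closure rfl
    · exact clB _ (Or.inl rfl)
    · exact absurd (Or.inr rfl) hx
  -- the two positive memberships
  have hBD : ({b, d} : Set X) ∈
      {A : Set X | A ⊆ psiXiS ({∅, {c}} : Set (Set X)) A} := by
    intro x hx
    simp only [psiXiS, mem_compl_iff, xiS, mem_setOf_eq]
    push_neg
    refine ⟨{b, d}, soBD, hx, ?_⟩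
    have hempty : sCl ({b, d} : Set X) ∩ ({b, d} : Set X)ᶜ = ∅ := by
      rw [Set.eq_empty_iff_forall_notMem]
      intro y hy
      exact hy.2 (sCl_sub _ _ subset_rfl soBDc hy.1)
    rw [hempty]
    exact Or.inl rfl
  have hAD : ({a, d} : Set X) ∈
      {A : Set X | A ⊆ psiXiS ({∅, {c}} : Set (Set X)) A} := by
    intro x hx
    simp only [psiXiS, mem_compl_iff, xiS, mem_setOf_eq]
    push_neg
    refine ⟨{a, d}, soAD, hx, ?_⟩
    have hempty : sCl ({a, d} : Set X) ∩ ({a, d} : Set X)ᶜ = ∅ := by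
      rw [Set.eq_empty_iff_forall_notMem]
      intro y hy
      exact hy.2 (sCl_sub _ _ subset_rfl soADc hy.1)
    rw [hempty]
    exact Or.inl rfl
  -- {d} is not in the family
  have hDnot : ({d} : Set X) ∉
      {A : Set X | A ⊆ psiXiS ({∅, {c}} : Set (Set X)) A} := by
    intro h
    have hd := h (mem_singleton d)
    simp only [psiXiS, mem_compl_iff, xiS, mem_setOf_eq] at hd
    apply hd
    intro U hU hdU hmem
    have h1 : d ∈ closure (interior U) := hU hdU
    rw [mem_closure_iff] at h1
    obtain ⟨y, -, hy⟩ := h1 univ isOpen_univ (mem_univ d)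
    have hcase : a ∈ interior U ∨ b ∈ interior U := by
      rcases (hopen_iff _).1 (isOpen_interior (s := U)) with h2 | h2 | h2 | h2 | h2 <;>
          rw [h2] at hy ⊢
      · exact absurd hy (notMem_empty y)
      · exact Or.inl (mem_univ a)
      · exact Or.inl rfl
      · exact Or.inr rfl
      · exact Or.inl (Or.inl rfl)
    obtain ⟨x, hxab, hxU⟩ : ∃ x : X, (x = a ∨ x = b) ∧ x ∈ U := by
      rcases hcase with h2 | h2
      · exact ⟨a, Or.inl rfl, interior_subset h2⟩
      · exact ⟨b, Or.inr rfl, interior_subset h2⟩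
    have hxsCl : x ∈ sCl U := sub_sCl U hxU
    have hxd : x ≠ d := by rcases hxab with rfl | rfl <;> [exact had; exact hbd]
    have hxc : x ≠ c := by rcases hxab with rfl | rfl <;> [exact hac; exact hbc]
    have hxmem : x ∈ sCl U ∩ ({d} : Set X)ᶜ := ⟨hxsCl, by simpa using hxd⟩
    rcases (memI _).1 hmem with h2 | h2
    · rw [h2] at hxmem; exact hxmem
    · rw [h2] at hxmem; exact hxc hxmem
  -- intersection equality
  have hinter : ({d} : Set X) = ({b, d} : Set X) ∩ {a, d} := by
    ext x
    simp only [mem_singleton_iff, mem_inter_iff, mem_insert_iff]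
    constructor
    · rintro rfl; exact ⟨Or.inr rfl, Or.inr rfl⟩
    · rintro ⟨hb | hd', ha | hd'⟩
      · exact absurd (hb ▸ ha) hab.symm
      · exact hd'
      · exact hd'
      · exact hd'
  refine ⟨?_, hBD, hAD, hinter, hDnot, ?_⟩
  · refine ⟨Or.inl rfl, ?_, ?_⟩
    · intro A B hA hBA
      rcases (memI A).1 hA with rfl | rfl
      · exact (memI B).2 (Or.inl (Set.subset_empty_iff.mp hBA))
      · rcases Set.subset_singleton_iff_eq.mp hBA with rfl | rfl
        · exact Or.inl rfl
        · exact Or.inr rfl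
    · intro A B hA hB
      rcases (memI A).1 hA with rfl | rfl <;> rcases (memI B).1 hB with rfl | rfl <;>
        apply (memI _).2 <;> simp
  · intro h
    exact hDnot (hinter ▸ h _ _ hBD hAD)
end

section
/- Let X = {a, b, c, d} be a four-point space whose open sets are exactly ∅, X, {c,d}, {b,c,d}, {a,c,d}, and let I = {∅, {a}}, which is an ideal on X. For A = {b, d} and B = {b, c}, one has ψ_{ξ_β}(A) = {a, b, d}, ψ_{ξ_β}(B) = {a, b, c}, and ψ_{ξ_β}(A ∩ B) = ∅; in particular ψ_{ξ_β}(A ∩ B) ≠ ψ_{ξ_β}(A) ∩ ψ_{ξ_β}(B). -/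
open Set

theorem stmt_17 {X : Type*} [TopologicalSpace X] (a b c d : X)
    (hab : a ≠ b) (hac : a ≠ c) (had : a ≠ d)
    (hbc : b ≠ c) (hbd : b ≠ d) (hcd : c ≠ d)
    (huniv : (Set.univ : Set X) = {a, b, c, d})
    (hopen : {S : Set X | IsOpen S} = {∅, Set.univ, {c, d}, {b, c, d}, {a, c, d}}) :
    IsIdealOn ({∅, {a}} : Set (Set X)) ∧
    psiXiB ({∅, {a}} : Set (Set X)) {b, d} = {a, b, d} ∧
    psiXiB ({∅, {a}} : Set (Set X)) {b, c} = {a, b, c} ∧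
    psiXiB ({∅, {a}} : Set (Set X)) (({b, d} : Set X) ∩ {b, c}) = ∅ ∧
    psiXiB ({∅, {a}} : Set (Set X)) (({b, d} : Set X) ∩ {b, c}) ≠
      psiXiB ({∅, {a}} : Set (Set X)) {b, d} ∩ psiXiB ({∅, {a}} : Set (Set X)) {b, c} := by
  have hmem : ∀ x : X, x = a ∨ x = b ∨ x = c ∨ x = d := by
    intro x
    have hx : x ∈ ({a, b, c, d} : Set X) := huniv ▸ mem_univ x
    simpa using hx
  have hba := hab.symm; have hca := hac.symm; have hda := had.symm
  have hcb := hbc.symm; have hdb := hbd.symm; have hdc := hcd.symm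
  have hopen' : ∀ S : Set X, IsOpen S ↔
      S = ∅ ∨ S = univ ∨ S = {c, d} ∨ S = {b, c, d} ∨ S = {a, c, d} := by
    intro S
    have h : S ∈ {S : Set X | IsOpen S} ↔
        S ∈ ({∅, Set.univ, {c, d}, {b, c, d}, {a, c, d}} : Set (Set X)) := by rw [hopen]
    simpa using h
  have hI : ∀ S : Set X, S ∈ ({∅, {a}} : Set (Set X)) ↔ S = ∅ ∨ S = {a} := by
    intro S; simp
  have hclo : ∀ S : Set X, (c ∈ S ∨ d ∈ S) → closure S = univ := by
    intro S hS
    have hopenC : IsOpen (closure S)ᶜ := isClosed_closure.isOpen_compl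
    rcases (hopen' _).1 hopenC with h | h | h | h | h
    · rwa [compl_empty_iff] at h
    · exfalso
      have he : closure S = ∅ := by rw [← compl_univ, ← h, compl_compl]
      rcases hS with hc | hd
      · exact absurd (he ▸ subset_closure hc) (notMem_empty c)
      · exact absurd (he ▸ subset_closure hd) (notMem_empty d)
    all_goals 
      exfalso
      have hc' : c ∈ (closure S)ᶜ ∧ d ∈ (closure S)ᶜ := by rw [h]; constructor <;> simp
      rcases hS with hc | hd
      · exact hc'.1 (subset_closure hc)
      · exact hc'.2 (subset_closure hd)
  have hclab : IsClosed ({a, b} : Set X) := by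
    rw [← isOpen_compl_iff]
    have hcompl : ({a, b} : Set X)ᶜ = {c, d} := by
      ext y
      rcases hmem y with h | h | h | h <;> subst h <;>
        simp [hab, hac, had, hbc, hbd, hcd, hba, hca, hda, hcb, hdb, hdc]
    rw [hcompl, hopen']
    tauto
  have hint : ∀ S : Set X, S ⊆ {a, b} → interior S = ∅ := by
    intro S hS
    by_contra h
    rcases (hopen' _).1 isOpen_interior with h' | h' | h' | h' | h'
    · exact h h'
    all_goals 
      have hc : c ∈ interior S := by rw [h']; simp
      have hm := hS (interior_subset hc)
      simp only [mem_insert_iff, mem_singleton_iff] at hm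
      rcases hm with h1 | h1
      exacts [hac h1.symm, hbc h1.symm]
  have hbeta : ∀ S : Set X, BetaOpen S ↔ S = ∅ ∨ c ∈ S ∨ d ∈ S := by
    intro S
    constructor
    · intro h
      by_contra hcon
      push_neg at hcon
      obtain ⟨hne, hc, hd⟩ := hcon
      have hsub : S ⊆ {a, b} := by
        intro y hy
        rcases hmem y with h1 | h1 | h1 | h1
        · rw [h1]; exact Or.inl rfl
        · rw [h1]; exact Or.inr rfl
        · exact absurd (h1 ▸ hy) hc
        · exact absurd (h1 ▸ hy) hd
      have h1 : closure S ⊆ {a, b} := closure_minimal hsub hclab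
      have h2 : interior (closure S) = ∅ := hint _ h1
      unfold BetaOpen at h
      rw [h2, closure_empty] at h
      obtain ⟨y, hy⟩ := hne
      exact h hy
    · rintro (h | h)
      · rw [h]; exact empty_subset _
      · have hc := hclo S h
        unfold BetaOpen
        rw [hc, interior_univ, closure_univ]
        exact subset_univ S
  have hsubCl : ∀ U : Set X, U ⊆ betaCl U := fun U =>
    subset_sInter (fun C hC => hC.1)
  have hbCl1 : ∀ U : Set X, (c ∉ U ∨ d ∉ U) → betaCl U = U := by
    intro U hU
    apply subset_antisymm
    · apply sInter_subset_of_mem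
      refine ⟨subset_rfl, ?_⟩
      rw [hbeta]
      rcases hU with h | h
      · exact Or.inr (Or.inl h)
      · exact Or.inr (Or.inr h)
    · exact hsubCl U
  have hbCl2 : ∀ U : Set X, c ∈ U → d ∈ U → betaCl U = univ := by
    intro U hc hd
    apply eq_univ_of_univ_subset
    intro x _
    rw [betaCl, mem_sInter]
    rintro C ⟨hUC, hbo⟩
    rcases (hbeta _).1 hbo with h | h | h
    · have : C = univ := by rwa [compl_empty_iff] at h
      rw [this]; trivial
    · exact absurd (hUC hc) h
    · exact absurd (hUC hd) h
  have hpsi : ∀ (A : Set X) (x : X),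
      x ∈ psiXiB ({∅, {a}} : Set (Set X)) A ↔
        ∃ U : Set X, BetaOpen U ∧ x ∈ U ∧ betaCl U ∩ Aᶜ ∈ ({∅, {a}} : Set (Set X)) := by
    intro A x
    simp only [psiXiB, xiB, mem_compl_iff, mem_setOf_eq, not_forall, Classical.not_imp,
      not_not, exists_prop]
  -- ψ({b,d}) = {a,b,d}
  have hA : psiXiB ({∅, {a}} : Set (Set X)) {b, d} = ({a, b, d} : Set X) := by
    ext x
    rcases hmem x with h | h | h | h <;> rw [h]
    · refine iff_of_true ((hpsi _ _).2 ⟨{a, d}, ?_, ?_, ?_⟩) (by simp)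
      · rw [hbeta]; exact Or.inr (Or.inr (by simp))
      · simp
      · rw [hbCl1 _ (Or.inl (by simp [hca, hcd])), hI]
        right
        ext y
        rcases hmem y with h | h | h | h <;> subst h <;>
          simp [hab, hac, had, hbc, hbd, hcd, hba, hca, hda, hcb, hdb, hdc]
    · refine iff_of_true ((hpsi _ _).2 ⟨{b, d}, ?_, ?_, ?_⟩) (by simp)
      · rw [hbeta]; exact Or.inr (Or.inr (by simp))
      · simp
      · rw [hbCl1 _ (Or.inl (by simp [hcb, hcd])), inter_compl_self, hI]
        exact Or.inl rfl
    · refine iff_of_false ?_ (by simp [hca, hcb, hcd])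
      rw [hpsi]
      rintro ⟨U, hbo, hcU, hmemI⟩
      have hc2 : c ∈ betaCl U ∩ ({b, d} : Set X)ᶜ :=
        ⟨hsubCl U hcU, by simp [hcb, hcd]⟩
      rcases (hI _).1 hmemI with he | he <;> rw [he] at hc2 <;> simp [hca] at hc2
    · refine iff_of_true ((hpsi _ _).2 ⟨{d}, ?_, ?_, ?_⟩) (by simp)
      · rw [hbeta]; exact Or.inr (Or.inr rfl)
      · rfl
      · rw [hbCl1 _ (Or.inl (by simp [hcd])), hI]
        left
        ext y
        rcases hmem y with h | h | h | h <;> subst h <;>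
          simp [hab, hac, had, hbc, hbd, hcd, hba, hca, hda, hcb, hdb, hdc]
  -- ψ({b,c}) = {a,b,c}
  have hB : psiXiB ({∅, {a}} : Set (Set X)) {b, c} = ({a, b, c} : Set X) := by
    ext x
    rcases hmem x with h | h | h | h <;> rw [h]
    · refine iff_of_true ((hpsi _ _).2 ⟨{a, c}, ?_, ?_, ?_⟩) (by simp)
      · rw [hbeta]; exact Or.inr (Or.inl (by simp))
      · simp
      · rw [hbCl1 _ (Or.inr (by simp [hda, hdc])), hI]
        right
        ext y
        rcases hmem y with h | h | h | h <;> subst h <;>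
          simp [hab, hac, had, hbc, hbd, hcd, hba, hca, hda, hcb, hdb, hdc]
    · refine iff_of_true ((hpsi _ _).2 ⟨{b, c}, ?_, ?_, ?_⟩) (by simp)
      · rw [hbeta]; exact Or.inr (Or.inl (by simp))
      · simp
      · rw [hbCl1 _ (Or.inr (by simp [hdb, hdc])), inter_compl_self, hI]
        exact Or.inl rfl
    · refine iff_of_true ((hpsi _ _).2 ⟨{c}, ?_, ?_, ?_⟩) (by simp)
      · rw [hbeta]; exact Or.inr (Or.inl rfl)
      · rfl
      · rw [hbCl1 _ (Or.inr (by simp [hdc])), hI]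
        left
        ext y
        rcases hmem y with h | h | h | h <;> subst h <;>
          simp [hab, hac, had, hbc, hbd, hcd, hba, hca, hda, hcb, hdb, hdc]
    · refine iff_of_false ?_ (by simp [hda, hdb, hdc])
      rw [hpsi]
      rintro ⟨U, hbo, hdU, hmemI⟩
      have hd2 : d ∈ betaCl U ∩ ({b, c} : Set X)ᶜ :=
        ⟨hsubCl U hdU, by simp [hdb, hdc]⟩
      rcases (hI _).1 hmemI with he | he <;> rw [he] at hd2 <;> simp [hda] at hd2
  have hcap : (({b, d} : Set X) ∩ {b, c}) = {b} := by
    ext y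
    rcases hmem y with h | h | h | h <;> subst h <;>
      simp [hab, hac, had, hbc, hbd, hcd, hba, hca, hda, hcb, hdb, hdc]
  have hAB : psiXiB ({∅, {a}} : Set (Set X)) (({b, d} : Set X) ∩ {b, c}) = ∅ := by
    rw [hcap, eq_empty_iff_forall_notMem]
    intro x hx
    rcases (hpsi _ _).1 hx with ⟨U, hbo, hxU, hmemI⟩
    rcases (hbeta U).1 hbo with h | h | h
    · rw [h] at hxU; exact hxU
    · have hc2 : c ∈ betaCl U ∩ ({b} : Set X)ᶜ := ⟨hsubCl U h, by simp [hcb]⟩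
      rcases (hI _).1 hmemI with he | he <;> rw [he] at hc2 <;> simp [hca] at hc2
    · have hd2 : d ∈ betaCl U ∩ ({b} : Set X)ᶜ := ⟨hsubCl U h, by simp [hdb]⟩
      rcases (hI _).1 hmemI with he | he <;> rw [he] at hd2 <;> simp [hda] at hd2
  refine ⟨⟨by simp, ?_, ?_⟩, hA, hB, hAB, ?_⟩
  · intro A B hA' hBA
    rw [hI] at hA' ⊢
    rcases hA' with rfl | rfl
    · exact Or.inl (subset_empty_iff.1 hBA)
    · rcases subset_singleton_iff_eq.1 hBA with h | h
      exacts [Or.inl h, Or.inr h]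
  · intro A B hA' hB'
    rw [hI] at hA' hB' ⊢
    rcases hA' with rfl | rfl <;> rcases hB' with rfl | rfl <;> simp
  · rw [hAB, hA, hB]
    intro h
    have ha : a ∈ ({a, b, d} : Set X) ∩ {a, b, c} := ⟨Or.inl rfl, Or.inl rfl⟩
    rw [← h] at ha
    exact ha
end

section
/- Let X = {a, b, c, d} be a four-point space whose open sets are exactly ∅, X, {c,d}, {b,c,d}, {a,c,d}, and let I = {∅, {a}}, which is an ideal on X. Define σ_{ξ_β} = {A ⊆ X : A ⊆ ψ_{ξ_β}(A)}. Then {b, d} ∈ σ_{ξ_β} and {b, c} ∈ σ_{ξ_β}, but {b} = {b,d} ∩ {b,c} ∉ σ_{ξ_β}; in particular σ_{ξ_β} is not closed under binary intersections and hence is not a topology on X. -/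
open Set

theorem stmt_18 {X : Type*} [TopologicalSpace X] (a b c d : X)
    (hab : a ≠ b) (hac : a ≠ c) (had : a ≠ d)
    (hbc : b ≠ c) (hbd : b ≠ d) (hcd : c ≠ d)
    (huniv : (Set.univ : Set X) = {a, b, c, d})
    (hopen : {S : Set X | IsOpen S} = {∅, Set.univ, {c, d}, {b, c, d}, {a, c, d}}) :
    IsIdealOn ({∅, {a}} : Set (Set X)) ∧
    ({b, d} : Set X) ∈ {A : Set X | A ⊆ psiXiB ({∅, {a}} : Set (Set X)) A} ∧
    ({b, c} : Set X) ∈ {A : Set X | A ⊆ psiXiB ({∅, {a}} : Set (Set X)) A} ∧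
    ({b} : Set X) = ({b, d} : Set X) ∩ {b, c} ∧
    ({b} : Set X) ∉ {A : Set X | A ⊆ psiXiB ({∅, {a}} : Set (Set X)) A} ∧
    ¬ (∀ A B : Set X, A ∈ {A : Set X | A ⊆ psiXiB ({∅, {a}} : Set (Set X)) A} →
        B ∈ {A : Set X | A ⊆ psiXiB ({∅, {a}} : Set (Set X)) A} →
        A ∩ B ∈ {A : Set X | A ⊆ psiXiB ({∅, {a}} : Set (Set X)) A}) := by

  -- basic membership facts
  have hIs : ∀ S : Set X, IsOpen S ↔
      S ∈ ({∅, Set.univ, {c, d}, {b, c, d}, {a, c, d}} : Set (Set X)) := by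
    intro S
    constructor
    · intro h; rw [← hopen]; exact h
    · intro h; have := hopen ▸ h; exact this
  have hcd_mem : ∀ U : Set X, IsOpen U → U.Nonempty → c ∈ U ∧ d ∈ U := by
    intro U hU hne
    rcases (hIs U).mp hU with h | h | h | h | h
    · exact absurd (h ▸ hne) (by simp)
    · subst h; exact ⟨mem_univ _, mem_univ _⟩
    · subst h; exact ⟨by simp, by simp⟩
    · subst h; exact ⟨by simp, by simp⟩
    · subst h; exact ⟨by simp, by simp⟩
  have hclosure : ∀ S : Set X, (c ∈ S ∨ d ∈ S) → closure S = Set.univ := by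
    intro S hS
    apply eq_univ_of_forall
    intro x
    rw [mem_closure_iff]
    intro U hU hxU
    obtain ⟨hc, hd⟩ := hcd_mem U hU ⟨x, hxU⟩
    rcases hS with h | h
    · exact ⟨c, hc, h⟩
    · exact ⟨d, hd, h⟩
  have hbeta : ∀ S : Set X, (c ∈ S ∨ d ∈ S) → BetaOpen S := by
    intro S h
    unfold BetaOpen
    rw [hclosure S h, interior_univ, closure_univ]
    exact subset_univ S
  have hsubCl : ∀ U C : Set X, U ⊆ C → BetaOpen Cᶜ → betaCl U ⊆ C := by
    intro U C h1 h2
    exact sInter_subset_of_mem ⟨h1, h2⟩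
  have hUsubCl : ∀ U : Set X, U ⊆ betaCl U := by
    intro U
    exact subset_sInter (fun C hC => hC.1)
  have hI : ∀ S : Set X, S ∈ ({∅, {a}} : Set (Set X)) ↔ S = ∅ ∨ S = {a} := by
    intro S; simp
  -- the two good sets
  have hbdMem : ({b, d} : Set X) ∈ {A : Set X | A ⊆ psiXiB ({∅, {a}} : Set (Set X)) A} := by
    intro x hx hmem
    apply hmem ({b, d} : Set X) (hbeta _ (Or.inr (by simp))) hx
    rw [hI]
    left
    apply eq_empty_of_subset_empty
    intro y hy
    have h1 : betaCl ({b, d} : Set X) ⊆ ({b, d} : Set X) :=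
      hsubCl _ _ Subset.rfl (hbeta _ (Or.inl (by simp [hbc.symm, hcd])))
    exact hy.2 (h1 hy.1)
  have hbc2 : ({b, c} : Set X) ∈ {A : Set X | A ⊆ psiXiB ({∅, {a}} : Set (Set X)) A} := by
    intro x hx hmem
    apply hmem ({b, c} : Set X) (hbeta _ (Or.inl (by simp))) hx
    rw [hI]
    left
    apply eq_empty_of_subset_empty
    intro y hy
    have h1 : betaCl ({b, c} : Set X) ⊆ ({b, c} : Set X) :=
      hsubCl _ _ Subset.rfl (hbeta _ (Or.inr (by simp [hbd.symm, hcd.symm])))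
    exact hy.2 (h1 hy.1)
  -- {b} fails
  have hbinter : ({b} : Set X) = ({b, d} : Set X) ∩ {b, c} := by
    ext x
    simp only [mem_singleton_iff, mem_inter_iff, mem_insert_iff]
    constructor
    · rintro rfl; exact ⟨Or.inl rfl, Or.inl rfl⟩
    · rintro ⟨h1 | h1, h2 | h2⟩ <;> first | assumption | (exfalso; exact hcd (h1 ▸ h2.symm ▸ rfl))
  have hbnot : ({b} : Set X) ∉ {A : Set X | A ⊆ psiXiB ({∅, {a}} : Set (Set X)) A} := by
    intro h
    have hb : b ∈ psiXiB ({∅, {a}} : Set (Set X)) ({b} : Set X) := h rfl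
    apply hb
    intro U hU hbU
    -- U is β-open and contains b, so it meets {c,d}
    have h1 : b ∈ closure (interior (closure U)) := hU hbU
    have hne : (interior (closure U)).Nonempty := by
      rw [mem_closure_iff] at h1
      obtain ⟨y, _, hy2⟩ := h1 ({b, c, d} : Set X) ((hIs _).mpr (by simp)) (by simp)
      exact ⟨y, hy2⟩
    have hd' : d ∈ closure U :=
      interior_subset (hcd_mem _ isOpen_interior hne).2
    rw [mem_closure_iff] at hd'
    obtain ⟨x, hx1, hx2⟩ := hd' ({c, d} : Set X) ((hIs _).mpr (by simp)) (by simp)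
    have hxne : x ≠ b := by
      rcases hx1 with h | h
      · exact h ▸ hbc.symm
      · simp at h; exact h ▸ hbd.symm
    have hxmem : x ∈ betaCl U ∩ ({b} : Set X)ᶜ := ⟨hUsubCl U hx2, by simpa using hxne⟩
    intro hmem
    rw [hI] at hmem
    rcases hmem with h | h
    · rw [h] at hxmem; exact hxmem
    · rw [h] at hxmem
      rcases hx1 with h1 | h1
      · exact hac (hxmem ▸ h1.symm ▸ rfl)
      · simp at h1; exact had (hxmem ▸ h1.symm ▸ rfl)
  refine ⟨⟨by simp, ?_, ?_⟩, hbdMem, hbc2, hbinter, hbnot, ?_⟩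
  · intro A B hA hBA
    rw [hI] at hA ⊢
    rcases hA with rfl | rfl
    · left; exact subset_empty_iff.mp hBA
    · rcases subset_singleton_iff_eq.mp hBA with h | h
      · left; exact h
      · right; exact h
  · intro A B hA hB
    rw [hI] at hA hB ⊢
    rcases hA with rfl | rfl <;> rcases hB with rfl | rfl <;> simp
  · intro hall
    exact hbnot (hbinter ▸ hall _ _ hbdMem hbc2)
end
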